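/- arXiv:1905.05801 — 9 statements merged into one kernel-verified Lean document; each statement's English description precedes it below -/
import Mathlib

section
/- Let L be the language over alphabet {0,1} accepted by the group automaton with states q0,q1,q2, transitions q0 →1 q0, q0 →0 q1, q1 →0 q0, q1 →1 q2, q2 →1 q1, q2 →0 q2, initial state q0 and unique final state q1. Then for x = 01^ω and x' = 101^ω one has x ⊓ L = x' ⊓ L = 01^ω and x ⊓ (A* \ L) = x' ⊓ (A* \ L) = 1^ω; hence the map x ↦ (x ⊓ L, x ⊓ (A* \ L)) is not injective even for group sets L. -/
open Filter Topology

def pref {A : Type*} (x : ℕ → A) (n : ℕ) : List A := (List.range n).map x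

noncomputable def nonObliviousSel {A : Type*} (x : ℕ → A) (L : Set (List A)) : ℕ → A :=
  fun n => x (Nat.nth (fun i => pref x (i + 1) ∈ L) n)

/-- The group automaton with states `q0, q1, q2` over the alphabet `{0,1}`,
transitions `q0 →1 q0`, `q0 →0 q1`, `q1 →0 q0`, `q1 →1 q2`, `q2 →1 q1`, `q2 →0 q2`,
initial state `q0` and unique final state `q1`. -/
def exampleAutomaton : DFA (Fin 2) (Fin 3) where
  step := fun q a => ![![1, 0], ![0, 2], ![2, 1]] q a
  start := 0
  accept := {1}

lemma pref_succ {A : Type*} (x : ℕ → A) (n : ℕ) :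
    pref x (n + 1) = pref x n ++ [x n] := by
  simp [pref, List.range_succ]

lemma count_even (n : ℕ) : Nat.count (fun i => i % 2 = 0) (2 * n) = n := by
  induction n with
  | zero => simp
  | succ k ih =>
      have : 2 * (k + 1) = (2 * k + 1) + 1 := by ring
      have e1 : 2 * k % 2 = 0 := by omega
      have e2 : (2 * k + 1) % 2 = 1 := by omega
      rw [this, Nat.count_succ, Nat.count_succ, ih]
      simp [e1, e2]

lemma count_odd (n : ℕ) : Nat.count (fun i => i % 2 = 1) (2 * n + 1) = n := by
  induction n with
  | zero => simp [Nat.count_succ]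
  | succ k ih =>
      have : 2 * (k + 1) + 1 = ((2 * k + 1) + 1) + 1 := by ring
      have e1 : (2 * k + 1) % 2 = 1 := by omega
      have e2 : (2 * k + 2) % 2 = 0 := by omega
      rw [this, Nat.count_succ, Nat.count_succ, ih]
      simp [e1, e2]

lemma nth_even (n : ℕ) : Nat.nth (fun i => i % 2 = 0) n = 2 * n := by
  have := Nat.nth_count (p := fun i => i % 2 = 0) (n := 2 * n) (by omega)
  rwa [count_even] at this

lemma nth_odd (n : ℕ) : Nat.nth (fun i => i % 2 = 1) n = 2 * n + 1 := by
  have := Nat.nth_count (p := fun i => i % 2 = 1) (n := 2 * n + 1) (by omega)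
  rwa [count_odd] at this

/-- with `L` accepted by the above group automaton, `x = 01^ω` and
`x' = 101^ω` satisfy `x ⊓ L = x' ⊓ L = 01^ω` and
`x ⊓ (A^* \ L) = x' ⊓ (A^* \ L) = 1^ω`; hence `x ↦ (x ⊓ L, x ⊓ (A^* \ L))`
is not injective, even though `L` is a group set. -/
theorem exampleAutomaton_not_injective :
    (∀ a : Fin 2, Function.Bijective (fun q => exampleAutomaton.step q a)) ∧
    (let L : Set (List (Fin 2)) := {w | w ∈ exampleAutomaton.accepts}
     let x : ℕ → Fin 2 := fun n => if n = 0 then 0 else 1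
     let x' : ℕ → Fin 2 := fun n => if n = 0 then 1 else if n = 1 then 0 else 1
     nonObliviousSel x L = x ∧
     nonObliviousSel x' L = x ∧
     nonObliviousSel x Lᶜ = (fun _ => 1) ∧
     nonObliviousSel x' Lᶜ = (fun _ => 1) ∧
     ¬ Function.Injective
        (fun z : ℕ → Fin 2 => (nonObliviousSel z L, nonObliviousSel z Lᶜ))) := by
  constructor
  · decide
  intro L x x'
  -- state after reading pref x (i+1)
  have evalx : ∀ i : ℕ, exampleAutomaton.eval (pref x (i + 1)) =
      if i % 2 = 0 then 1 else 2 := by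
    intro i
    induction i with
    | zero =>
        simp [pref, List.range_succ, x, DFA.eval, DFA.evalFrom, exampleAutomaton]
    | succ k ih =>
        rw [pref_succ, DFA.eval_append_singleton, ih]
        have hx : x (k + 1) = 1 := by simp [x]
        rw [hx]
        rcases Nat.even_or_odd k with h | h
        · have h0 : k % 2 = 0 := Nat.even_iff.mp h
          have h1 : (k+1) % 2 = 1 := by omega
          simp [h0, h1, exampleAutomaton]
        · have h0 : k % 2 = 1 := Nat.odd_iff.mp h
          have h1 : (k+1) % 2 = 0 := by omega
          simp [h0, h1, exampleAutomaton]
  have evalx' : ∀ i : ℕ, exampleAutomaton.eval (pref x' (i + 1)) =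
      if i = 0 then 0 else if i % 2 = 1 then 1 else 2 := by
    intro i
    induction i with
    | zero =>
        simp [pref, List.range_succ, x', DFA.eval, DFA.evalFrom, exampleAutomaton]
    | succ k ih =>
        rw [pref_succ, DFA.eval_append_singleton, ih]
        by_cases hk : k = 0
        · subst hk
          simp [x', exampleAutomaton]
        · have hx : x' (k + 1) = 1 := by
            simp only [x']
            rw [if_neg (by omega), if_neg (by omega)]
          rw [hx, if_neg hk]
          rcases Nat.even_or_odd k with h | h
          · have h0 : k % 2 = 0 := Nat.even_iff.mp h
            have h1 : (k+1) % 2 = 1 := by omega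
            rw [if_neg (by omega : ¬ k % 2 = 1)]
            rw [if_neg (Nat.succ_ne_zero k), if_pos h1]
            simp [exampleAutomaton]
          · have h0 : k % 2 = 1 := Nat.odd_iff.mp h
            rw [if_pos h0]
            rw [if_neg (Nat.succ_ne_zero k), if_neg (by omega : ¬ (k+1) % 2 = 1)]
            simp [exampleAutomaton]
  have memx : ∀ i : ℕ, (pref x (i + 1) ∈ L) ↔ i % 2 = 0 := by
    intro i
    simp only [L, Set.mem_setOf_eq, DFA.mem_accepts]
    rw [evalx i]
    rcases Nat.even_or_odd i with h | h
    · have h0 : i % 2 = 0 := Nat.even_iff.mp h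
      simp [h0, exampleAutomaton]
    · have h0 : i % 2 = 1 := Nat.odd_iff.mp h
      simp [h0, exampleAutomaton]
  have memx' : ∀ i : ℕ, (pref x' (i + 1) ∈ L) ↔ i % 2 = 1 := by
    intro i
    simp only [L, Set.mem_setOf_eq, DFA.mem_accepts]
    rw [evalx' i]
    by_cases hi : i = 0
    · subst hi; simp [exampleAutomaton]
    · rw [if_neg hi]
      rcases Nat.even_or_odd i with h | h
      · have h0 : i % 2 = 0 := Nat.even_iff.mp h
        rw [if_neg (by omega)]
        simp [exampleAutomaton]
        omega
      · have h0 : i % 2 = 1 := Nat.odd_iff.mp h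
        rw [if_pos h0]
        simp [exampleAutomaton, h0]
  have predx : (fun i => pref x (i + 1) ∈ L) = (fun i => i % 2 = 0) := by
    funext i; exact propext (memx i)
  have predx' : (fun i => pref x' (i + 1) ∈ L) = (fun i => i % 2 = 1) := by
    funext i; exact propext (memx' i)
  have predxc : (fun i => pref x (i + 1) ∈ Lᶜ) = (fun i => i % 2 = 1) := by
    funext i
    simp only [Set.mem_compl_iff, memx i]
    exact propext (by omega)
  have predx'c : (fun i => pref x' (i + 1) ∈ Lᶜ) = (fun i => i % 2 = 0) := by
    funext i
    simp only [Set.mem_compl_iff, memx' i]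
    exact propext (by omega)
  have h1 : nonObliviousSel x L = x := by
    funext n
    simp only [nonObliviousSel, predx, nth_even]
    by_cases hn : n = 0
    · subst hn; simp
    · simp only [x]
      rw [if_neg (by omega), if_neg hn]
  have h2 : nonObliviousSel x' L = x := by
    funext n
    simp only [nonObliviousSel, predx', nth_odd]
    by_cases hn : n = 0
    · subst hn; simp [x, x']
    · simp only [x, x']
      rw [if_neg (by omega), if_neg (by omega), if_neg hn]
  have h3 : nonObliviousSel x Lᶜ = (fun _ => 1) := by
    funext n
    simp only [nonObliviousSel, predxc, nth_odd]
    simp only [x]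
    rw [if_neg (by omega)]
  have h4 : nonObliviousSel x' Lᶜ = (fun _ => 1) := by
    funext n
    simp only [nonObliviousSel, predx'c, nth_even]
    by_cases hn : n = 0
    · subst hn; simp [x']
    · simp only [x']
      rw [if_neg (by omega), if_neg (by omega)]
  refine ⟨h1, h2, h3, h4, ?_⟩
  intro hinj
  have hxx : x = x' := hinj (by
    show (nonObliviousSel x L, nonObliviousSel x Lᶜ) = (nonObliviousSel x' L, nonObliviousSel x' Lᶜ)
    rw [h1, h2, h3, h4])
  have := congrFun hxx 0
  simp [x, x'] at this
end

section
/- Let 𝒜 be a group automaton with state set Q over alphabet A, with final state set F, and let 𝒯 be the two-output transducer obtained from 𝒜 by replacing each transition p →a q with p →(a | a, ε) q if q ∈ F and with p →(a | ε, a) q if q ∉ F. Then the function mapping each finite run p →(u | v, w) q of 𝒯 to the triple (q, v, w) is injective: two runs with the same starting state p, same ending state q, and same output pair (v, w) have the same input word u (and are the same run). -/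
/-!
Read the run backwards. The final state `q` tells whether the last transition entered `F`,
hence which output received the last input symbol `a`, so `a` is the last letter of that
output. In a group automaton `· ↦ δ(·, a)` is injective, so `q` and `a` determine the state
before the last step, and induction on the length of the input recovers the whole run.
-/

/-- The two-output transducer obtained from a DFA `M`: processing input `u` from state `p`,
each consumed symbol is appended to the first output if the reached state is final,
and to the second output otherwise.  `trun M p u = (q, v, w)` where `q` is the state
reached and `(v, w)` the pair of outputs. -/
def trun {A Q : Type*} (M : DFA A Q) [DecidablePred (· ∈ M.accept)] :
    Q → List A → Q × List A × List A
  | p, [] => (p, [], [])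
  | p, a :: u =>
    let q := M.step p a
    let r := trun M q u
    if q ∈ M.accept then (r.1, a :: r.2.1, r.2.2) else (r.1, r.2.1, a :: r.2.2)

def appendOutput {A Q : Type*} (M : DFA A Q) [DecidablePred (· ∈ M.accept)]
    (q : Q) (a : A) (o : List A × List A) : List A × List A :=
  if q ∈ M.accept then (o.1 ++ [a], o.2) else (o.1, o.2 ++ [a])

section

variable {A Q : Type*} (M : DFA A Q) [DecidablePred (· ∈ M.accept)]

theorem appendOutput_ne_nil (q : Q) (a : A) (o : List A × List A) :
    appendOutput M q a o ≠ ([], []) := by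
  unfold appendOutput
  split_ifs <;> simp

theorem appendOutput_inj {q : Q} {a a' : A} {o o' : List A × List A}
    (h : appendOutput M q a o = appendOutput M q a' o') : a = a' ∧ o = o' := by
  unfold appendOutput at h
  split_ifs at h <;>
  · simp only [Prod.mk.injEq, List.append_singleton_inj] at h
    refine ⟨?_, Prod.ext ?_ ?_⟩ <;> tauto

theorem trun_nil (p : Q) : trun M p [] = (p, [], []) := rfl

theorem trun_append_singleton (p : Q) (u : List A) (a : A) :
    trun M p (u ++ [a]) =
      (M.step (trun M p u).1 a, appendOutput M (M.step (trun M p u).1 a) a (trun M p u).2) := by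
  induction u generalizing p with
  | nil => by_cases h : M.step p a ∈ M.accept <;> simp [trun, appendOutput, h]
  | cons b u ih =>
    simp only [List.cons_append, trun, ih]
    by_cases hb : M.step p b ∈ M.accept <;>
    by_cases ha : M.step (trun M (M.step p b) u).1 a ∈ M.accept <;>
      simp [appendOutput, hb, ha]

theorem trun_injective_of_injective_step (hM : ∀ a : A, Function.Injective (M.step · a))
    (p : Q) : Function.Injective (trun M p) := by
  intro u
  induction u using List.reverseRecOn with
  | nil =>
    intro u' h
    rcases u'.eq_nil_or_concat' with rfl | ⟨t', a', rfl⟩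
    · rfl
    · rw [trun_append_singleton, trun_nil, Prod.mk.injEq] at h
      exact absurd h.2.symm (appendOutput_ne_nil M _ _ _)
  | append_singleton t a ih =>
    intro u' h
    rcases u'.eq_nil_or_concat' with rfl | ⟨t', a', rfl⟩
    · rw [trun_append_singleton, trun_nil, Prod.mk.injEq] at h
      exact absurd h.2 (appendOutput_ne_nil M _ _ _)
    · rw [trun_append_singleton, trun_append_singleton, Prod.mk.injEq] at h
      obtain ⟨hq, ho⟩ := h
      rw [hq] at ho
      obtain ⟨rfl, hr⟩ := appendOutput_inj M ho
      rw [ih (Prod.ext (hM a hq) hr)]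

end

/-- for a group automaton `𝒜`, the map sending each finite run
`p →(u | v, w) q` of the associated two-output transducer to the triple `(q, v, w)`
is one-to-one: two runs from the same state `p` with the same ending state and same
pair of outputs have the same input word. -/
theorem trun_injective {A Q : Type*} (M : DFA A Q) [DecidablePred (· ∈ M.accept)]
    (hG : ∀ a : A, Function.Bijective (fun q => M.step q a)) :
    ∀ (p : Q) (u u' : List A), trun M p u = trun M p u' → u = u' :=
  fun p => trun_injective_of_injective_step M (fun a => (hG a).1) p
end

section
/- Let ⟨Q, A, δ, F⟩ be a transitive group automaton and k ∈ ℕ, and form the k-digit buffered automaton with state set Q × A^k where on input a: if δ(q,a) ∉ F then (q,w) ↦ (δ(q,a), w), and if δ(q,a) ∈ F then (q,w) ↦ (δ(q,a), w[2..k]a). Then from any buffered state (q, w) with q ∈ F, and for any target word u = a_1⋯a_k ∈ A^k, there is a finite input word leading from (q, w) to some state whose second coordinate is exactly u. In particular every word of A^k appears as the buffer content of some state reachable from (q,w). -/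
/-!
From an accepting state `p`, feed the letter `a` repeatedly. Since `δ(·, a)` permutes the finite
set `Q`, the `a`-orbit of `p` returns to `p ∈ F`, so it enters `F` at some first step: the letters
before that step leave the buffer untouched and the last one pushes `a`, ending again in `F`.
Pushing the `k` letters of `u` one after the other in this way leaves exactly `u` in the buffer.
-/

/-- Shift the buffer word `w ∈ A^k` left by one position and append `a`
(i.e. `w[2..k]a`). -/
def shiftPush {A : Type*} {k : ℕ} (w : Fin k → A) (a : A) : Fin k → A :=
  fun i => if h : (i : ℕ) + 1 < k then w ⟨(i : ℕ) + 1, h⟩ else a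

/-- One step of the `k`-digit buffered automaton built over the DFA `M`: on input `a`,
`(q, w) ↦ (δ(q,a), w)` if `δ(q,a) ∉ F`, and `(q, w) ↦ (δ(q,a), w[2..k]a)` if
`δ(q,a) ∈ F`. -/
def bstep {A Q : Type*} (M : DFA A Q) [DecidablePred (· ∈ M.accept)] (k : ℕ) :
    Q × (Fin k → A) → A → Q × (Fin k → A) :=
  fun s a =>
    if M.step s.1 a ∈ M.accept then (M.step s.1 a, shiftPush s.2 a)
    else (M.step s.1 a, s.2)

section ShiftPush

variable {A : Type*} {k : ℕ}

theorem ofFn_shiftPush (w : Fin k → A) (a : A) :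
    List.ofFn (shiftPush w a) = (List.ofFn w ++ [a]).tail := by
  refine List.ext_getElem (by simp) fun i hi _ => ?_
  simp only [List.getElem_ofFn, List.getElem_tail, shiftPush]
  split_ifs with h
  · simp [List.getElem_append_left, h]
  · simp only [List.length_ofFn] at hi
    simp [List.getElem_append_right, show i + 1 = k by omega]

/-- After pushing the letters of `l`, the buffer holds the last `k` letters of `w ++ l`. -/
theorem foldl_shiftPush_apply (l : List A) (w : Fin k → A) (i : Fin k) :
    List.foldl shiftPush w l i = (List.ofFn w ++ l)[(i : ℕ) + l.length]'(by simp) := by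
  induction l generalizing w with
  | nil => simp
  | cons a l ih =>
    rw [List.foldl_cons, ih, List.getElem_of_eq (by rw [ofFn_shiftPush])]
    simp only [← List.tail_append_of_ne_nil (List.concat_ne_nil a (List.ofFn w)), List.append_assoc,
      List.getElem_tail, List.singleton_append, List.length_cons, add_assoc]

theorem foldl_shiftPush_ofFn (w u : Fin k → A) :
    List.foldl shiftPush w (List.ofFn u) = u := by
  funext i
  simp [foldl_shiftPush_apply, List.getElem_append_right]

end ShiftPush

namespace DFA

variable {A Q : Type*} (M : DFA A Q)

/-- Transitions that leave the buffer of `bstep` unchanged. -/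
def SilentStep (r s : Q) : Prop :=
  ∃ a, M.step r a = s ∧ s ∉ M.accept

/-- The set of states silently reachable from `p` would otherwise be closed under the
injective map `δ(·, a)`, hence mapped onto itself, so `p` would be some `δ(r, a)`. -/
theorem exists_silent_reach_step_mem_accept [Finite Q]
    (hinj : ∀ a : A, Function.Injective (M.step · a)) {p : Q} (hp : p ∈ M.accept) (a : A) :
    ∃ r, Relation.ReflTransGen M.SilentStep p r ∧ M.step r a ∈ M.accept := by
  by_contra! h
  let S := {r // Relation.ReflTransGen M.SilentStep p r}
  let f : S → S := fun r => ⟨M.step r.1 a, r.2.tail ⟨a, rfl, h r.1 r.2⟩⟩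
  have hf : Function.Injective f := fun r s hrs => Subtype.ext (hinj a (congrArg Subtype.val hrs))
  obtain ⟨r, hr⟩ := Finite.injective_iff_surjective.mp hf ⟨p, .refl⟩
  have hrp : M.step r.1 a = p := congrArg Subtype.val hr
  exact h r.1 r.2 (by rwa [hrp])

variable [DecidablePred (· ∈ M.accept)] (k : ℕ)

theorem exists_foldl_bstep_of_silent_reach {p r : Q}
    (h : Relation.ReflTransGen M.SilentStep p r) (w : Fin k → A) :
    ∃ inp : List A, List.foldl (bstep M k) (p, w) inp = (r, w) := by
  induction h with
  | refl => exact ⟨[], rfl⟩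
  | tail _ hstep ih =>
    obtain ⟨inp, hinp⟩ := ih
    obtain ⟨a, rfl, hna⟩ := hstep
    exact ⟨inp ++ [a], by simp [List.foldl_append, hinp, bstep, hna]⟩

theorem exists_foldl_bstep_eq_shiftPush [Finite Q]
    (hinj : ∀ a : A, Function.Injective (M.step · a)) {p : Q} (hp : p ∈ M.accept)
    (w : Fin k → A) (a : A) :
    ∃ (inp : List A) (p' : Q), p' ∈ M.accept ∧
      List.foldl (bstep M k) (p, w) inp = (p', shiftPush w a) := by
  obtain ⟨r, hr, hra⟩ := M.exists_silent_reach_step_mem_accept hinj hp a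
  obtain ⟨inp, hinp⟩ := M.exists_foldl_bstep_of_silent_reach k hr w
  exact ⟨inp ++ [a], M.step r a, hra, by simp [List.foldl_append, hinp, bstep, hra]⟩

theorem exists_foldl_bstep_eq_foldl_shiftPush [Finite Q]
    (hinj : ∀ a : A, Function.Injective (M.step · a)) (l : List A) {p : Q}
    (hp : p ∈ M.accept) (w : Fin k → A) :
    ∃ (inp : List A) (p' : Q), p' ∈ M.accept ∧
      List.foldl (bstep M k) (p, w) inp = (p', List.foldl shiftPush w l) := by
  induction l generalizing p w with
  | nil => exact ⟨[], p, hp, rfl⟩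
  | cons a l ih =>
    obtain ⟨inp₁, p₁, hp₁, h₁⟩ := M.exists_foldl_bstep_eq_shiftPush k hinj hp w a
    obtain ⟨inp₂, p₂, hp₂, h₂⟩ := ih hp₁ (shiftPush w a)
    exact ⟨inp₁ ++ inp₂, p₂, hp₂, by rw [List.foldl_append, h₁, h₂, List.foldl_cons]⟩

end DFA

theorem buffer_reaches_any_word_general {A Q : Type*} [Fintype Q] (M : DFA A Q)
    [DecidablePred (· ∈ M.accept)]
    (hG : ∀ a : A, Function.Bijective (fun q => M.step q a))
    (k : ℕ) (q : Q) (hq : q ∈ M.accept) (w : Fin k → A) (u : Fin k → A) :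
    ∃ inp : List A, (List.foldl (bstep M k) (q, w) inp).2 = u := by
  obtain ⟨inp, _, _, h⟩ :=
    M.exists_foldl_bstep_eq_foldl_shiftPush k (fun a => (hG a).1) (List.ofFn u) hq w
  exact ⟨inp, by rw [h, foldl_shiftPush_ofFn]⟩

/-- in the `k`-digit buffered automaton over a transitive group automaton,
from any buffered state `(q, w)` with `q` final and for any target word `u ∈ A^k`,
some finite input word leads from `(q, w)` to a state whose buffer content is exactly
`u`. -/
theorem buffer_reaches_any_word {A Q : Type*} [Fintype Q] (M : DFA A Q)
    [DecidablePred (· ∈ M.accept)]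
    (hG : ∀ a : A, Function.Bijective (fun q => M.step q a))
    (htrans : ∀ p q : Q, ∃ u : List A, M.evalFrom p u = q)
    (k : ℕ) (q : Q) (hq : q ∈ M.accept) (w : Fin k → A) (u : Fin k → A) :
    ∃ inp : List A, (List.foldl (bstep M k) (q, w) inp).2 = u :=
  buffer_reaches_any_word_general M hG k q hq w u
end

section
/- Let X = A^ℕ with the shift T and the uniform Bernoulli measure μ (μ(C_w) = (#A)^{-|w|} for cylinder sets C_w), and let ⟨Q', A, δ_k, F_k⟩ be a k-digit buffered group automaton restricted to a transition-closed subset Q' of Q × A^k such that δ restricted to the first coordinate is a group automaton. Define the augmented map T̃ on X × Q' by T̃(x, s) = (Tx, δ_k(s, x_1)) and the measure μ̃(C_w × {s}) = (#A)^{-|w|}/(#Q'). Then T̃ preserves μ̃. -/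
open MeasureTheory
open MeasurableSpace Set

/-- The cylinder of sequences starting with the word `w`. -/
def cyl {A : Type*} (w : List A) : Set (ℕ → A) :=
  {x | ∀ i : Fin w.length, x (i : ℕ) = w.get i}

lemma cyl_measurableSet {A : Type*} [MeasurableSpace A] [DiscreteMeasurableSpace A]
    (w : List A) : MeasurableSet (cyl w) := by
  have h : cyl w = ⋂ i : Fin w.length, (fun x : ℕ → A => x (i : ℕ)) ⁻¹' {w.get i} := by
    ext x; simp [cyl]
  rw [h]
  exact MeasurableSet.iInter fun i => (measurable_pi_apply _) (measurableSet_singleton _)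

lemma cyl_nil {A : Type*} : cyl ([] : List A) = univ := by
  ext x; simp [cyl]

lemma mem_cyl_cons {A : Type*} {x : ℕ → A} {a : A} {w : List A} :
    x ∈ cyl (a :: w) ↔ x 0 = a ∧ (fun n => x (n + 1)) ∈ cyl w := by
  constructor
  · intro h
    refine ⟨h ⟨0, Nat.succ_pos _⟩, fun i => ?_⟩
    simpa using h i.succ
  · rintro ⟨h0, h1⟩ ⟨i, hi⟩
    cases i with
    | zero => exact h0
    | succ j => simpa using h1 ⟨j, by simpa using hi⟩

lemma pi_eq_generateFrom_cyl {A : Type*} [Fintype A] [MeasurableSpace A]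
    [DiscreteMeasurableSpace A] :
    (inferInstance : MeasurableSpace (ℕ → A)) =
      MeasurableSpace.generateFrom {S | ∃ w : List A, S = cyl w} := by
  apply le_antisymm
  · have hm : ∀ i : ℕ, @Measurable (ℕ → A) A
        (MeasurableSpace.generateFrom {S | ∃ w : List A, S = cyl w}) _ (fun x => x i) := by
      intro i
      refine @measurable_to_countable' A (ℕ → A) _ _
        (MeasurableSpace.generateFrom {S | ∃ w : List A, S = cyl w}) _ fun a => ?_
      have h : (fun x : ℕ → A => x i) ⁻¹' {a} =
          ⋃ (f : Fin (i + 1) → A) (_ : f (Fin.last i) = a), cyl (List.ofFn f) := by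
        ext x
        simp only [mem_preimage, mem_singleton_iff, mem_iUnion]
        constructor
        · intro hx
          refine ⟨fun j => x j, by simpa [Fin.last], fun j => ?_⟩
          rw [List.get_ofFn]
          rfl
        · rintro ⟨f, hf, hx⟩
          have h2 := hx ⟨i, by simp⟩
          rw [List.get_ofFn] at h2
          rw [h2]
          exact congrArg f (Fin.ext rfl) |>.trans hf
      rw [h]
      exact MeasurableSet.iUnion fun f => MeasurableSet.iUnion fun _ =>
        measurableSet_generateFrom ⟨_, rfl⟩
    exact iSup_le fun i => measurable_iff_comap_le.mp (hm i)
  · exact generateFrom_le (by rintro _ ⟨w, rfl⟩; exact cyl_measurableSet w)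

lemma discrete_eq_generateFrom_singletons {α : Type*} [MeasurableSpace α]
    [MeasurableSingletonClass α] [Countable α] :
    (inferInstance : MeasurableSpace α) =
      MeasurableSpace.generateFrom {S | ∃ a : α, S = {a}} := by
  apply le_antisymm
  · intro S _
    have hS : S = ⋃ a ∈ S, {a} := by simp
    rw [hS]
    exact MeasurableSet.biUnion (Set.to_countable S)
      fun a _ => measurableSet_generateFrom ⟨a, rfl⟩
  · exact generateFrom_le (by rintro _ ⟨a, rfl⟩; exact measurableSet_singleton a)

lemma cyl_spanning {A : Type*} : IsCountablySpanning {S : Set (ℕ → A) | ∃ w : List A, S = cyl w} := by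
  refine ⟨fun _ => cyl [], fun n => ⟨[], rfl⟩, ?_⟩
  simp only [iUnion_const]
  ext x; simp [cyl]

lemma singletons_spanning {α : Type*} [Countable α] [Nonempty α] :
    IsCountablySpanning {S : Set α | ∃ a : α, S = {a}} := by
  obtain ⟨f, hf⟩ := exists_surjective_nat α
  exact ⟨fun n => {f n}, fun n => ⟨f n, rfl⟩, by
    ext a; simpa using ⟨(hf a).choose, (hf a).choose_spec⟩⟩

lemma cyl_inter_of_le {A : Type*} {w w' : List A} {x : ℕ → A}
    (hx : x ∈ cyl w ∩ cyl w') (hle : w.length ≤ w'.length) :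
    cyl w ∩ cyl w' = cyl w' := by
  apply Set.inter_eq_self_of_subset_right
  intro y hy i
  have h1 : x (i : ℕ) = w.get i := hx.1 i
  have h2 : x (i : ℕ) = w'.get ⟨i, lt_of_lt_of_le i.2 hle⟩ := hx.2 ⟨i, lt_of_lt_of_le i.2 hle⟩
  rw [hy ⟨i, lt_of_lt_of_le i.2 hle⟩, ← h2, h1]

lemma cyl_pi_system {A : Type*} {α : Type*} :
    IsPiSystem (Set.image2 (· ×ˢ ·) {S : Set (ℕ → A) | ∃ w : List A, S = cyl w}
      {S : Set α | ∃ a : α, S = {a}}) := by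
  rintro _ ⟨_, ⟨w, rfl⟩, _, ⟨s, rfl⟩, rfl⟩ _ ⟨_, ⟨w', rfl⟩, _, ⟨s', rfl⟩, rfl⟩ hne
  obtain ⟨⟨x, t⟩, hx⟩ := hne
  rw [Set.prod_inter_prod] at *
  obtain ⟨⟨hx1, hx2⟩, hs1, hs2⟩ : (x ∈ cyl w ∩ cyl w') ∧ t ∈ ({s} : Set α) ∩ {s'} := by
    simpa [Set.mem_prod] using hx
  simp only [Set.mem_singleton_iff] at hs1 hs2
  have hss' : ({s} : Set α) ∩ {s'} = {s} := by rw [← hs1, ← hs2]; simp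
  rcases le_total w.length w'.length with h | h
  · rw [cyl_inter_of_le ⟨hx1, hx2⟩ h, hss']
    exact ⟨cyl w', ⟨w', rfl⟩, {s}, ⟨s, rfl⟩, rfl⟩
  · rw [Set.inter_comm (cyl w), cyl_inter_of_le ⟨hx2, hx1⟩ h, hss']
    exact ⟨cyl w, ⟨w, rfl⟩, {s}, ⟨s, rfl⟩, rfl⟩

lemma bstep_eq_iff {A Q : Type*} (M : DFA A Q) [DecidablePred (· ∈ M.accept)] {k : ℕ}
    {s : Q × (Fin k → A)} {a : A} {t : Q × (Fin k → A)} :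
    bstep M k s a = t ↔ M.step s.1 a = t.1 ∧
      ((t.1 ∈ M.accept → shiftPush s.2 a = t.2) ∧ (t.1 ∉ M.accept → s.2 = t.2)) := by
  constructor
  · rintro rfl
    unfold bstep
    by_cases h : M.step s.1 a ∈ M.accept
    · simp [h]
    · simp [h]
  · rintro ⟨h1, h2, h3⟩
    unfold bstep
    by_cases h : M.step s.1 a ∈ M.accept
    · rw [if_pos h]
      rw [h1] at h
      exact Prod.ext h1 (h2 h)
    · rw [if_neg h]
      rw [h1] at h
      exact Prod.ext h1 (h3 h)

lemma bstep_fiber_card {A Q : Type*} [Fintype A] [Fintype Q]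
    (M : DFA A Q) [DecidablePred (· ∈ M.accept)]
    (hG : ∀ a : A, Function.Bijective (fun q => M.step q a))
    {k : ℕ} {Q' : Set (Q × (Fin k → A))}
    (hclosed : ∀ s ∈ Q', ∀ a : A, bstep M k s a ∈ Q') (t : ↥Q') :
    Nat.card {p : ↥Q' × A //
      (⟨bstep M k (p.1 : Q × (Fin k → A)) p.2, hclosed _ p.1.2 _⟩ : ↥Q') = t} =
      Fintype.card A := by
  classical
  haveI : Fintype ↥Q' := Fintype.ofFinite _
  set g : ↥Q' × A → ↥Q' :=
    fun p => (⟨bstep M k (p.1 : Q × (Fin k → A)) p.2, hclosed _ p.1.2 _⟩ : ↥Q') with hg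
  -- injection of each fiber into A
  have hinj : ∀ u : ↥Q', Set.InjOn
      (fun p : ↥Q' × A => if h : (u : Q × (Fin k → A)).1 ∈ M.accept ∧ 0 < k
        then (p.1 : Q × (Fin k → A)).2 ⟨0, h.2⟩ else p.2)
      {p | g p = u} := by
    intro u p hp p' hp' hφ
    simp only [Set.mem_setOf_eq, hg] at hp hp'
    have hp1 := (bstep_eq_iff M).mp (congrArg Subtype.val hp)
    have hp2 := (bstep_eq_iff M).mp (congrArg Subtype.val hp')
    obtain ⟨e1, e2, e3⟩ := hp1
    obtain ⟨f1, f2, f3⟩ := hp2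
    simp only at hφ
    have hstep : ∀ {q q' : Q} {b : A}, M.step q b = M.step q' b → q = q' :=
      fun {q q' b} h => (hG b).1 h
    by_cases hF : (u : Q × (Fin k → A)).1 ∈ M.accept
    · by_cases hk : 0 < k
      · simp only [dif_pos (show ((u : Q × (Fin k → A)).1 ∈ M.accept ∧ 0 < k) from ⟨hF, hk⟩)] at hφ
        have hs := e2 hF
        have hs' := f2 hF
        -- last buffer entry determines the input letter
        have ha : p.2 = p'.2 := by
          have l1 := congrFun hs ⟨k - 1, by omega⟩
          have l2 := congrFun hs' ⟨k - 1, by omega⟩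
          simp only [shiftPush] at l1 l2
          rw [dif_neg (by omega)] at l1 l2
          rw [l1, l2]
        -- buffers agree
        have hw : (p.1 : Q × (Fin k → A)).2 = (p'.1 : Q × (Fin k → A)).2 := by
          funext j
          rcases j with ⟨jv, hj⟩
          cases jv with
          | zero => exact hφ
          | succ m =>
            have l1 := congrFun hs ⟨m, by omega⟩
            have l2 := congrFun hs' ⟨m, by omega⟩
            simp only [shiftPush] at l1 l2
            rw [dif_pos (by omega : m + 1 < k)] at l1 l2
            rw [show (⟨m + 1, hj⟩ : Fin k) = ⟨m + 1, by omega⟩ from rfl]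
            rw [l1, l2]
        have hq : (p.1 : Q × (Fin k → A)).1 = (p'.1 : Q × (Fin k → A)).1 := by
          apply hstep (b := p.2)
          rw [e1, ha, f1]
        exact Prod.ext (Subtype.ext (Prod.ext hq hw)) ha
      · simp only [dif_neg (show ¬((u : Q × (Fin k → A)).1 ∈ M.accept ∧ 0 < k) from fun hh => hk hh.2)] at hφ
        have hw : (p.1 : Q × (Fin k → A)).2 = (p'.1 : Q × (Fin k → A)).2 := by
          funext j; exact absurd j.2 (by omega)
        have hq : (p.1 : Q × (Fin k → A)).1 = (p'.1 : Q × (Fin k → A)).1 := by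
          apply hstep (b := p.2); rw [e1, hφ, f1]
        exact Prod.ext (Subtype.ext (Prod.ext hq hw)) hφ
    · simp only [dif_neg (show ¬((u : Q × (Fin k → A)).1 ∈ M.accept ∧ 0 < k) from fun hh => hF hh.1)] at hφ
      have hw : (p.1 : Q × (Fin k → A)).2 = (p'.1 : Q × (Fin k → A)).2 := by
        rw [e3 hF, f3 hF]
      have hq : (p.1 : Q × (Fin k → A)).1 = (p'.1 : Q × (Fin k → A)).1 := by
        apply hstep (b := p.2); rw [e1, hφ, f1]
      exact Prod.ext (Subtype.ext (Prod.ext hq hw)) hφ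
  have hle : ∀ u : ↥Q',
      (Finset.univ.filter (fun p : ↥Q' × A => g p = u)).card ≤ Fintype.card A := by
    intro u
    have := Finset.card_le_card_of_injOn
      (fun p : ↥Q' × A => if h : (u : Q × (Fin k → A)).1 ∈ M.accept ∧ 0 < k
        then (p.1 : Q × (Fin k → A)).2 ⟨0, h.2⟩ else p.2)
      (s := Finset.univ.filter (fun p : ↥Q' × A => g p = u)) (t := Finset.univ)
      (fun p _ => Finset.mem_univ _) ?_
    · simpa using this
    · intro p hp p' hp' h
      exact hinj u (by simpa using hp) (by simpa using hp') h
  have hsum : ∑ u : ↥Q', (Finset.univ.filter (fun p : ↥Q' × A => g p = u)).card =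
      Fintype.card ↥Q' * Fintype.card A := by
    rw [← Finset.card_eq_sum_card_fiberwise (fun p _ => Finset.mem_univ (g p))]
    simp [Fintype.card_prod]
  have hall : ∀ u : ↥Q',
      (Finset.univ.filter (fun p : ↥Q' × A => g p = u)).card = Fintype.card A := by
    by_contra hne
    push_neg at hne
    obtain ⟨u, hu⟩ := hne
    have hlt : ∑ u : ↥Q', (Finset.univ.filter (fun p : ↥Q' × A => g p = u)).card <
        ∑ _u : ↥Q', Fintype.card A :=
      Finset.sum_lt_sum (fun i _ => hle i) ⟨u, Finset.mem_univ _, lt_of_le_of_ne (hle u) hu⟩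
    rw [hsum] at hlt
    simp [Finset.sum_const, Finset.card_univ, mul_comm] at hlt
  rw [Nat.card_eq_fintype_card, Fintype.card_subtype]
  exact hall t

/-- let `X = A^ℕ` with the shift `T`, and let `Q'` be a transition-closed,
strongly connected part of the `k`-digit buffered automaton over a group automaton.
The augmented map `T̃(x, s) = (Tx, δ_k(s, x_1))` preserves any measure `μ̃` satisfying
`μ̃(C_w × {s}) = (#A)^{-|w|} / #Q'` on cylinders. -/
theorem buffered_augmented_shift_measurePreserving
    {A Q : Type*} [Fintype A] [Fintype Q]
    [MeasurableSpace A] [DiscreteMeasurableSpace A]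
    [MeasurableSpace Q] [DiscreteMeasurableSpace Q]
    (M : DFA A Q) [DecidablePred (· ∈ M.accept)]
    (hG : ∀ a : A, Function.Bijective (fun q => M.step q a))
    (k : ℕ) (Q' : Set (Q × (Fin k → A)))
    (hclosed : ∀ s ∈ Q', ∀ a : A, bstep M k s a ∈ Q')
    (hSC : ∀ s ∈ Q', ∀ t ∈ Q', ∃ u : List A, List.foldl (bstep M k) s u = t)
    (μ : Measure ((ℕ → A) × Q'))
    (hμ : ∀ (w : List A) (s : Q'),
      μ (cyl w ×ˢ ({s} : Set Q')) =
        ((Fintype.card A : ENNReal) ^ w.length)⁻¹ / (Nat.card Q' : ENNReal)) :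
    MeasurePreserving
      (fun p : (ℕ → A) × Q' =>
        ((fun n => p.1 (n + 1)), (⟨bstep M k p.2.1 (p.1 0), hclosed _ p.2.2 _⟩ : Q')))
      μ μ := by
  classical
  set f : (ℕ → A) × Q' → (ℕ → A) × Q' :=
    (fun p : (ℕ → A) × Q' =>
      ((fun n => p.1 (n + 1)), (⟨bstep M k p.2.1 (p.1 0), hclosed _ p.2.2 _⟩ : Q'))) with hf
  have hmeas : Measurable f := by
    apply Measurable.prod
    · exact measurable_pi_lambda _ fun n => (measurable_pi_apply (n + 1)).comp measurable_fst
    · have h1 : Measurable (fun p : (ℕ → A) × Q' => (p.1 0, p.2)) := by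
        exact ((measurable_pi_apply 0).comp measurable_fst).prodMk measurable_snd
      exact Measurable.comp
        (g := fun q : A × Q' => (⟨bstep M k q.2.1 q.1, hclosed _ q.2.2 _⟩ : Q'))
        (measurable_of_countable _) h1
  refine ⟨hmeas, ?_⟩
  rcases isEmpty_or_nonempty ((ℕ → A) × Q') with hE | hNE
  · rw [μ.eq_zero_of_isEmpty]
    simp
  · obtain ⟨⟨x0, s0⟩⟩ := hNE
    haveI : Nonempty A := ⟨x0 0⟩
    haveI : Nonempty ↥Q' := ⟨s0⟩
    haveI : Fintype ↥Q' := Fintype.ofFinite _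
    set m : ENNReal := (Fintype.card A : ENNReal) with hm
    set c : ENNReal := (Nat.card ↥Q' : ENNReal) with hc
    have hm0 : m ≠ 0 := by
      simp [hm, Fintype.card_ne_zero]
    have hmtop : m ≠ ⊤ := by simp [hm]
    have hc0 : c ≠ 0 := by
      simp only [hc, Ne, Nat.cast_eq_zero]
      exact Nat.card_pos.ne'
    have hctop : c ≠ ⊤ := by simp [hc]
    -- measure of any cylinder-singleton block
    -- μ univ = 1
    have hdisjsing : ∀ (w : List A),
        Pairwise (Function.onFun Disjoint (fun s : ↥Q' => cyl w ×ˢ ({s} : Set ↥Q'))) := by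
      intro w s s' hne
      refine Set.disjoint_left.mpr ?_
      rintro ⟨x, t⟩ h1 h2
      rw [Set.mem_prod] at h1 h2
      exact hne (h1.2.symm.trans h2.2)
    have hunivset : (univ : Set ((ℕ → A) × ↥Q')) = ⋃ s : ↥Q', cyl [] ×ˢ ({s} : Set ↥Q') := by
      ext ⟨x, s⟩
      simp only [Set.mem_univ, true_iff, Set.mem_iUnion, Set.mem_prod, Set.mem_singleton_iff]
      exact ⟨s, by rw [cyl_nil]; exact ⟨trivial, rfl⟩⟩
    have huniv : μ univ = 1 := by
      rw [hunivset, measure_iUnion (hdisjsing []) (fun s =>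
        (cyl_measurableSet _).prod (measurableSet_singleton _))]
      simp only [hμ, List.length_nil, pow_zero, inv_one]
      rw [tsum_fintype]
      simp only [Finset.sum_const, Finset.card_univ, nsmul_eq_mul, ← hc]
      rw [← Nat.card_eq_fintype_card, ← hc, one_div]
      exact ENNReal.mul_inv_cancel hc0 hctop
    haveI : IsFiniteMeasure μ := ⟨by rw [huniv]; exact ENNReal.one_lt_top⟩
    haveI : IsFiniteMeasure (μ.map f) := by
      constructor
      rw [Measure.map_apply hmeas MeasurableSet.univ, Set.preimage_univ, huniv]
      exact ENNReal.one_lt_top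
    -- the generating π-system
    set C : Set (Set ((ℕ → A) × ↥Q')) :=
      Set.image2 (· ×ˢ ·) {S : Set (ℕ → A) | ∃ w : List A, S = cyl w}
        {S : Set ↥Q' | ∃ s : ↥Q', S = {s}} with hC
    have hgen : (inferInstance : MeasurableSpace ((ℕ → A) × ↥Q')) =
        MeasurableSpace.generateFrom C := by
      have h1 := pi_eq_generateFrom_cyl (A := A)
      have h2 := discrete_eq_generateFrom_singletons (α := ↥Q')
      have h3 : (inferInstance : MeasurableSpace ((ℕ → A) × ↥Q')) =
          @Prod.instMeasurableSpace _ _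
            (MeasurableSpace.generateFrom {S : Set (ℕ → A) | ∃ w : List A, S = cyl w})
            (MeasurableSpace.generateFrom {S : Set ↥Q' | ∃ s : ↥Q', S = {s}}) := by
        rw [← h1, ← h2]
      rw [h3, generateFrom_prod_eq cyl_spanning singletons_spanning]
    -- equality on the π-system
    have key : ∀ S ∈ C, (μ.map f) S = μ S := by
      rintro _ ⟨_, ⟨w, rfl⟩, _, ⟨t, rfl⟩, rfl⟩
      rw [Measure.map_apply hmeas ((cyl_measurableSet _).prod (measurableSet_singleton _))]
      have hpre : f ⁻¹' (cyl w ×ˢ ({t} : Set ↥Q')) =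
          ⋃ i : {p : ↥Q' × A //
            (⟨bstep M k (p.1 : Q × (Fin k → A)) p.2, hclosed _ p.1.2 _⟩ : ↥Q') = t},
            cyl ((i : ↥Q' × A).2 :: w) ×ˢ ({(i : ↥Q' × A).1} : Set ↥Q') := by
        ext ⟨x, s⟩
        simp only [hf, Set.mem_preimage, Set.mem_prod, Set.mem_singleton_iff, Set.mem_iUnion]
        constructor
        · rintro ⟨h1, h2⟩
          exact ⟨⟨(s, x 0), h2⟩, mem_cyl_cons.mpr ⟨rfl, h1⟩, rfl⟩
        · rintro ⟨⟨⟨s', a⟩, hi⟩, hx, hs⟩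
          obtain ⟨h0, h1⟩ := mem_cyl_cons.mp hx
          subst hs
          refine ⟨h1, ?_⟩
          simpa [h0] using hi
      rw [hpre, measure_iUnion ?_ (fun i =>
        (cyl_measurableSet _).prod (measurableSet_singleton _))]
      · haveI :  Fintype {p : ↥Q' × A //
            (⟨bstep M k (p.1 : Q × (Fin k → A)) p.2, hclosed _ p.1.2 _⟩ : ↥Q') = t} :=
          Fintype.ofFinite _
        simp only [hμ, List.length_cons]
        rw [tsum_fintype]
        simp only [Finset.sum_const, Finset.card_univ, nsmul_eq_mul]
        rw [← Nat.card_eq_fintype_card]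
        have hcard := bstep_fiber_card M hG hclosed t
        rw [show Nat.card {p : ↥Q' × A //
            (⟨bstep M k (p.1 : Q × (Fin k → A)) p.2, hclosed _ p.1.2 _⟩ : ↥Q') = t}
          = Fintype.card A from hcard]
        rw [← hm]
        rw [div_eq_mul_inv, div_eq_mul_inv, ← mul_assoc, pow_succ',
          ENNReal.mul_inv (Or.inl hm0) (Or.inl hmtop), ← mul_assoc,
          ENNReal.mul_inv_cancel hm0 hmtop, one_mul]
      · intro i j hne
        refine Set.disjoint_left.mpr ?_
        rintro ⟨x, s⟩ h1 h2
        rw [Set.mem_prod] at h1 h2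
        obtain ⟨hi0, -⟩ := mem_cyl_cons.mp h1.1
        obtain ⟨hj0, -⟩ := mem_cyl_cons.mp h2.1
        apply hne
        apply Subtype.ext
        apply Prod.ext
        · exact h1.2.symm.trans h2.2
        · exact hi0.symm.trans hj0
    refine ext_of_generate_finite C hgen cyl_pi_system key ?_
    rw [Measure.map_apply hmeas MeasurableSet.univ, Set.preimage_univ]
end

section
/- For a group automaton ⟨Q, A, δ, F⟩ and the buffered transition δ_k on Q × A^k (defined by (q,w) →a (δ(q,a), w) if δ(q,a) ∉ F and (q,w) →a (δ(q,a), w[2..k]a) if δ(q,a) ∈ F), the following holds: for every buffered state (q, w), if q ∉ F then for each a ∈ A there is exactly one buffered state mapping to (q,w) under input a, and if q ∈ F then a buffered state maps to (q,w) under input a only when a = w[k], in which case there are exactly #A such preimages. -/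
/-- preimage counting in the `k`-digit buffered automaton over a group
automaton.  For a buffered state `(q, w)`: if `q ∉ F`, each symbol `a` has exactly one
buffered preimage of `(q,w)`; if `q ∈ F`, a preimage under `a` exists only when
`a = w[k]` (the last buffer symbol), in which case there are exactly `#A` preimages. -/
theorem buffered_preimage_count {A Q : Type*} [Fintype A] (M : DFA A Q)
    [DecidablePred (· ∈ M.accept)]
    (hG : ∀ a : A, Function.Bijective (fun q => M.step q a))
    (k : ℕ) (hk : 0 < k) :
    ∀ (q : Q) (w : Fin k → A) (a : A),
      (q ∉ M.accept → ∃! s : Q × (Fin k → A), bstep M k s a = (q, w)) ∧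
      (q ∈ M.accept →
        (∀ s : Q × (Fin k → A), bstep M k s a = (q, w) → a = w ⟨k - 1, by omega⟩) ∧
        (a = w ⟨k - 1, by omega⟩ →
          Nat.card {s : Q × (Fin k → A) // bstep M k s a = (q, w)} = Fintype.card A)) := by
  intro q w a
  obtain ⟨p, hp⟩ := (hG a).2 q
  simp only at hp
  constructor
  · intro hq
    refine ⟨(p, w), ?_, ?_⟩
    · simp [bstep, hp, hq]
    · rintro ⟨p', w'⟩ h
      simp only [bstep] at h
      by_cases hc : M.step p' a ∈ M.accept
      · rw [if_pos hc] at h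
        have h1 : M.step p' a = q := (Prod.mk.injEq .. ▸ h :).1
        exact absurd (h1 ▸ hc) hq
      · rw [if_neg hc] at h
        rw [Prod.mk.injEq] at h
        obtain ⟨h1, h2⟩ := h
        have : p' = p := (hG a).1 (by simpa [hp] using h1)
        simp [this, h2]
  · intro hq
    constructor
    · rintro ⟨p', w'⟩ h
      simp only [bstep] at h
      by_cases hc : M.step p' a ∈ M.accept
      · rw [if_pos hc] at h
        rw [Prod.mk.injEq] at h
        obtain ⟨h1, h2⟩ := h
        have := congrFun h2 ⟨k - 1, by omega⟩
        simp only [shiftPush] at this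
        rw [dif_neg (by omega)] at this
        exact this
      · rw [if_neg hc] at h
        exact absurd ((Prod.mk.injEq .. ▸ h :).1 ▸ hq) hc
    · intro ha
      have e : {s : Q × (Fin k → A) // bstep M k s a = (q, w)} ≃ A :=
        { toFun := fun s => s.1.2 ⟨0, hk⟩
          invFun := fun b =>
            ⟨(p, fun i => if h0 : (i : ℕ) = 0 then b else w ⟨(i : ℕ) - 1, by omega⟩), by
              simp only [bstep, hp, if_pos hq]
              refine Prod.ext rfl ?_
              funext i
              simp only [shiftPush]
              split
              · next h =>
                rw [dif_neg (by omega)]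
                exact congrArg w (Fin.ext (by simp))
              · next h =>
                have : (i : ℕ) = k - 1 := by omega
                rw [ha]
                congr 1
                ext
                simp [this]⟩
          left_inv := by
            rintro ⟨⟨p', w'⟩, h⟩
            simp only [bstep] at h
            by_cases hc : M.step p' a ∈ M.accept
            · rw [if_pos hc] at h
              rw [Prod.mk.injEq] at h
              obtain ⟨h1, h2⟩ := h
              have hp' : p' = p := (hG a).1 (by simpa [hp] using h1)
              refine Subtype.ext (Prod.ext (by simp [hp']) ?_)
              funext i
              simp only
              split
              · next h0 =>
                congr 1
                ext
                simp [h0]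
              · next h0 =>
                have hi : ((i : ℕ) - 1) + 1 < k := by omega
                have := congrFun h2 ⟨(i : ℕ) - 1, by omega⟩
                simp only [shiftPush] at this
                rw [dif_pos hi] at this
                rw [← this]
                congr 1
                ext
                simp
                omega
            · rw [if_neg hc] at h
              exact absurd ((Prod.mk.injEq .. ▸ h :).1 ▸ hq) hc
          right_inv := by
            intro b
            simp }
      exact (Nat.card_congr e).trans Nat.card_eq_fintype_card
end

section
/- If a sequence x ∈ A^ℕ is not normal, then there exist an integer k ≥ 1 and an injective map c from A^k to a prefix-free set C of words over {0,1} (or over A) such that liminf_{n→∞} |c(x[1..k]) c(x[k+1..2k]) ⋯ c(x[(n-1)k+1..nk])| / (nk) < 1, i.e., block-coding by c compresses x. -/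
open Filter Topology

/-- Number of occurrences of `u` in `w` (as a factor). -/
noncomputable def occ {A : Type*} (w u : List A) : ℕ :=
  {i : ℕ | i + u.length ≤ w.length ∧ (w.drop i).take u.length = u}.ncard

/-- A sequence `x ∈ A^ℕ` is normal if every finite word occurs in its prefixes with
limiting frequency `(#A)^{-|w|}`. -/
def IsNormal {A : Type*} [Fintype A] (x : ℕ → A) : Prop :=
  ∀ w : List A,
    Tendsto (fun n => (occ (pref x n) w : ℝ) / n) atTop
      (nhds (((Fintype.card A : ℝ) ^ w.length)⁻¹))

/-!
If `x` is not normal, some word `w` of length `ℓ` has frequency staying `ε` away from `q^{-ℓ}`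
(`q = #A`) along a subsequence. In a uniformly random block of length `k`, the number of
occurrences of `w` has mean `(k + 1 - ℓ) q^{-ℓ}` and variance `O(ℓ k)`, because occurrences in
disjoint windows are independent. By Chebyshev, at most `q^{k-s}` blocks are atypical, i.e.
deviate from the mean by `ε k / 4`, once `k` is large. Along the subsequence at least a fraction
`ε / 4` of the aligned `k`-blocks of `x` must be atypical. Code a typical block `u` as `a₀ :: u` and an atypical
one as `a₁` followed by one of `q^{k-s}` words of length `k - s`: every block costs one extra
letter and every atypical block saves `s`, so for `s ≥ 8 / ε` the coded length is at most
`(1 - 1/k)` times the original one infinitely often.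
-/

section

open Finset
open scoped Classical

namespace Nat

theorem count_le_count_add_sub (p : ℕ → Prop) [DecidablePred p] (a b : ℕ) :
    count p b ≤ count p a + (b - a) := by
  rcases le_total b a with h | h
  · exact (count_monotone p h).trans (Nat.le_add_right _ _)
  · rw [← Nat.add_sub_cancel' h, count_add, Nat.add_sub_cancel_left]
    exact Nat.add_le_add_left (count_le _) _

theorem count_mul_eq_sum (p : ℕ → Prop) [DecidablePred p] (m k : ℕ) :
    count p (m * k) = ∑ j ∈ range m, count (fun i => p (j * k + i)) k := by
  induction m with
  | zero => simp
  | succ m ih => rw [Nat.succ_mul, count_add, ih, sum_range_succ]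

end Nat

variable {A : Type*}

def OccursAt (w : List A) (y : ℕ → A) (i : ℕ) : Prop :=
  ∀ t (ht : t < w.length), y (i + t) = w[t]

theorem occursAt_shift (w : List A) (y : ℕ → A) (a : ℕ) :
    OccursAt w (fun t => y (a + t)) = fun i => OccursAt w y (a + i) := by
  ext i
  simp only [OccursAt, Nat.add_assoc]

-- `n + 1 - w.length` (truncated) counts the positions `i` with `i + w.length ≤ n`.
theorem occ_pref_eq_count (y : ℕ → A) (w : List A) (n : ℕ) :
    occ (pref y n) w = Nat.count (OccursAt w y) (n + 1 - w.length) := by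
  rw [Nat.count_eq_card_filter_range, occ, ← Set.ncard_coe_finset]
  congr 1
  ext i
  simp only [pref, List.length_map, List.length_range, coe_filter, mem_range, Set.mem_ofPred_eq]
  refine ⟨fun ⟨hi, h⟩ => ⟨by omega, fun t ht => ?_⟩, fun ⟨hi, h⟩ => ⟨by omega, ?_⟩⟩
  · have := List.getElem_of_eq h (i := t) (by
      simp only [List.length_take, List.length_drop, List.length_map, List.length_range]; omega)
    simpa using this
  · exact List.ext_getElem (by simp; omega) fun t _ ht => by simpa using h t ht

theorem occursAt_iff_forall_mem_Ico (d : A) {w : List A} {y : ℕ → A} {i : ℕ} :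
    OccursAt w y i ↔ ∀ t ∈ Ico i (i + w.length), y t = w.getD (t - i) d := by
  refine ⟨fun h t ht => ?_, fun h t ht => ?_⟩
  · rw [mem_Ico] at ht
    obtain ⟨u, rfl⟩ := Nat.exists_eq_add_of_le ht.1
    have hu : u < w.length := by omega
    rw [Nat.add_sub_cancel_left, List.getD_eq_getElem _ _ hu]
    exact h u hu
  · have := h (i + t) (by simp [ht])
    rwa [Nat.add_sub_cancel_left, List.getD_eq_getElem _ _ ht] at this

theorem ofFn_eq_pref {k : ℕ} {v : Fin k → A} {y : ℕ → A} (h : ∀ i : Fin k, v i = y i) :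
    List.ofFn v = pref y k :=
  List.ext_getElem (by simp [pref]) fun i _ _ => by simp [pref, h]

theorem sum_count_eq_sum_card {V : Type*} [Fintype V] (P : V → ℕ → Prop) (r : ℕ) :
    ∑ v, Nat.count (P v) r = ∑ i ∈ range r, #{v | P v i} := by
  simp only [Nat.count_eq_card_filter_range, card_filter]
  exact sum_comm

theorem sum_count_sq_eq_sum_card {V : Type*} [Fintype V] (P : V → ℕ → Prop) (r : ℕ) :
    ∑ v, Nat.count (P v) r ^ 2 = ∑ i ∈ range r, ∑ i' ∈ range r, #{v | P v i ∧ P v i'} := by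
  simp only [Nat.count_eq_card_filter_range, card_filter, sq, sum_mul_sum, ite_zero_mul_ite_zero,
    mul_one]
  rw [sum_comm]
  exact sum_congr rfl fun i _ => sum_comm

theorem card_overlapping_windows_le (r ℓ i : ℕ) :
    #{i' ∈ range r | ¬(i + ℓ ≤ i' ∨ i' + ℓ ≤ i)} ≤ 2 * ℓ := by
  calc #{i' ∈ range r | ¬(i + ℓ ≤ i' ∨ i' + ℓ ≤ i)}
      ≤ #(Ico (i + 1 - ℓ) (i + ℓ)) := card_le_card fun i' hi' => by
        simp only [mem_filter, mem_range, mem_Ico] at hi' ⊢; omega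
    _ ≤ 2 * ℓ := by rw [Nat.card_Ico]; omega

theorem card_filter_le_abs_mul_sq_le_sum_sq {ι : Type*} (s : Finset ι) (f : ι → ℝ) {c : ℝ}
    (hc : 0 ≤ c) : #{i ∈ s | c ≤ |f i|} * c ^ 2 ≤ ∑ i ∈ s, f i ^ 2 := by
  calc (#{i ∈ s | c ≤ |f i|} : ℝ) * c ^ 2 = ∑ i ∈ s with c ≤ |f i|, c ^ 2 := by
        rw [sum_const, nsmul_eq_mul]
    _ ≤ ∑ i ∈ s with c ≤ |f i|, f i ^ 2 := sum_le_sum fun i hi => by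
        rw [← sq_abs (f i)]
        exact pow_le_pow_left₀ hc (mem_filter.1 hi).2 2
    _ ≤ ∑ i ∈ s, f i ^ 2 :=
        sum_le_sum_of_subset_of_nonneg (filter_subset _ _) fun _ _ _ => sq_nonneg _

section Cylinders

def extendFin (d : A) {k : ℕ} (v : Fin k → A) (t : ℕ) : A :=
  if h : t < k then v ⟨t, h⟩ else d

variable (d : A) (w : List A) {k : ℕ}

theorem occ_ofFn_eq_count (v : Fin k → A) :
    occ (List.ofFn v) w = Nat.count (OccursAt w (extendFin d v)) (k + 1 - w.length) := by
  rw [ofFn_eq_pref (y := extendFin d v) fun i => by simp [extendFin], occ_pref_eq_count]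

variable [Fintype A]

omit w in
theorem card_filter_extendFin_eqOn (S : Finset ℕ) (hS : ∀ t ∈ S, t < k)
    (g : ℕ → A) :
    #{v : Fin k → A | ∀ t ∈ S, extendFin d v t = g t} = Fintype.card A ^ (k - #S) := by
  have hfilter : ({v : Fin k → A | ∀ t ∈ S, extendFin d v t = g t} : Finset _) =
      Fintype.piFinset fun j : Fin k => if (j : ℕ) ∈ S then {g j} else univ := by
    ext v
    simp only [mem_filter, mem_univ, true_and, Fintype.mem_piFinset]
    refine ⟨fun h j => ?_, fun h t ht => ?_⟩
    · split_ifs with hj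
      · simpa [extendFin] using h j hj
      · exact mem_univ _
    · simpa [extendFin, hS t ht, ht] using h ⟨t, hS t ht⟩
  have hS' : #{j : Fin k | (j : ℕ) ∈ S} = #S := by
    rw [← card_attachFin S hS]
    congr 1
    ext j
    simp
  rw [hfilter, Fintype.card_piFinset]
  simp only [apply_ite card, card_singleton, card_univ]
  rw [prod_ite, prod_const_one, one_mul, prod_const, filter_not, card_sdiff, inter_univ, hS']
  simp

theorem card_occursAt {i : ℕ} (hi : i + w.length ≤ k) :
    #{v : Fin k → A | OccursAt w (extendFin d v) i} = Fintype.card A ^ (k - w.length) := by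
  simp only [occursAt_iff_forall_mem_Ico d]
  rw [card_filter_extendFin_eqOn d _ (fun t ht => by rw [mem_Ico] at ht; omega), Nat.card_Ico,
    Nat.add_sub_cancel_left]

theorem card_occursAt_and_occursAt {i i' : ℕ} (hi : i + w.length ≤ i') (hi' : i' + w.length ≤ k) :
    #{v : Fin k → A | OccursAt w (extendFin d v) i ∧ OccursAt w (extendFin d v) i'} =
      Fintype.card A ^ (k - 2 * w.length) := by
  have hdisj : Disjoint (Ico i (i + w.length)) (Ico i' (i' + w.length)) :=
    disjoint_left.mpr fun t ht ht' => by rw [mem_Ico] at ht ht'; omega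
  have hpair (y : ℕ → A) : OccursAt w y i ∧ OccursAt w y i' ↔
      ∀ t ∈ Ico i (i + w.length) ∪ Ico i' (i' + w.length),
        y t = w.getD (t - if t < i + w.length then i else i') d := by
    rw [forall_mem_union, occursAt_iff_forall_mem_Ico d, occursAt_iff_forall_mem_Ico d]
    refine and_congr (forall₂_congr fun t ht => ?_) (forall₂_congr fun t ht => ?_) <;>
      rw [mem_Ico] at ht
    · rw [if_pos ht.2]
    · rw [if_neg (by omega)]
  simp only [hpair]
  rw [card_filter_extendFin_eqOn d _ (fun t ht => by simp only [mem_union, mem_Ico] at ht; omega),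
    card_union_of_disjoint hdisj]
  simp only [Nat.card_Ico, Nat.add_sub_cancel_left, two_mul]

variable [Nonempty A]

theorem sum_occ_ofFn :
    ∑ v : Fin k → A, occ (List.ofFn v) w =
      (k + 1 - w.length) * Fintype.card A ^ (k - w.length) := by
  let d : A := Classical.arbitrary A
  simp only [occ_ofFn_eq_count d, sum_count_eq_sum_card]
  rw [sum_congr rfl fun i hi => card_occursAt d w (by rw [mem_range] at hi; omega), sum_const,
    card_range, smul_eq_mul]

theorem sum_occ_ofFn_sq_le :
    ∑ v : Fin k → A, occ (List.ofFn v) w ^ 2 ≤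
      (k + 1 - w.length) ^ 2 * Fintype.card A ^ (k - 2 * w.length) +
        2 * w.length * (k + 1 - w.length) * Fintype.card A ^ k := by
  let d : A := Classical.arbitrary A
  set ℓ := w.length
  set r := k + 1 - ℓ
  set q := Fintype.card A
  simp only [occ_ofFn_eq_count d, sum_count_sq_eq_sum_card]
  -- Occurrences in disjoint windows are independent; each position overlaps at most `2ℓ` others,
  -- and such pairs are bounded by `q ^ k`.
  have hpair : ∀ i ∈ range r, ∀ i' ∈ range r,
      #{v : Fin k → A | OccursAt w (extendFin d v) i ∧ OccursAt w (extendFin d v) i'} ≤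
        q ^ (k - 2 * ℓ) + if i + ℓ ≤ i' ∨ i' + ℓ ≤ i then 0 else q ^ k := by
    intro i hi i' hi'
    rw [mem_range] at hi hi'
    split_ifs with hnear
    · rw [add_zero]
      rcases hnear with hfar | hfar
      · exact (card_occursAt_and_occursAt d w hfar (by omega)).le
      · simp only [and_comm (a := OccursAt w _ i)]
        exact (card_occursAt_and_occursAt d w hfar (by omega)).le
    · calc _ ≤ #(univ : Finset (Fin k → A)) := card_le_univ _
        _ = q ^ k := by simp [q]
        _ ≤ _ := Nat.le_add_left _ _
  calc _ ≤ ∑ i ∈ range r, ∑ i' ∈ range r,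
        (q ^ (k - 2 * ℓ) + if i + ℓ ≤ i' ∨ i' + ℓ ≤ i then 0 else q ^ k) :=
        sum_le_sum fun i hi => sum_le_sum fun i' hi' => hpair i hi i' hi'
    _ = ∑ i ∈ range r,
          (r * q ^ (k - 2 * ℓ) + #{i' ∈ range r | ¬(i + ℓ ≤ i' ∨ i' + ℓ ≤ i)} * q ^ k) := by
        simp only [sum_add_distrib, sum_ite, sum_const_zero, zero_add, sum_const, card_range,
          smul_eq_mul]
    _ ≤ ∑ i ∈ range r, (r * q ^ (k - 2 * ℓ) + 2 * ℓ * q ^ k) :=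
        sum_le_sum fun i _ => by gcongr; exact card_overlapping_windows_le r ℓ i
    _ = _ := by simp only [sum_const, card_range, smul_eq_mul]; ring

end Cylinders

section Atypical

variable [Fintype A]

noncomputable def expectedOcc (w : List A) (k : ℕ) : ℝ :=
  ((k + 1 - w.length : ℕ) : ℝ) / (Fintype.card A : ℝ) ^ w.length

theorem sum_sq_occ_ofFn_sub_expectedOcc_le [Nonempty A] (w : List A) {k : ℕ}
    (hk : 2 * w.length ≤ k) :
    ∑ v : Fin k → A, ((occ (List.ofFn v) w : ℝ) - expectedOcc w k) ^ 2 ≤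
      2 * w.length * (k + 1 - w.length : ℕ) * (Fintype.card A : ℝ) ^ k := by
  have hS1 : ∑ v : Fin k → A, (occ (List.ofFn v) w : ℝ) =
      ((k + 1 - w.length : ℕ) : ℝ) * (Fintype.card A : ℝ) ^ (k - w.length) := by
    exact_mod_cast sum_occ_ofFn w
  have hS2 : ∑ v : Fin k → A, (occ (List.ofFn v) w : ℝ) ^ 2 ≤
      ((k + 1 - w.length : ℕ) : ℝ) ^ 2 * (Fintype.card A : ℝ) ^ (k - 2 * w.length) +
        2 * w.length * (k + 1 - w.length : ℕ) * (Fintype.card A : ℝ) ^ k := by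
    exact_mod_cast sum_occ_ofFn_sq_le w
  set ℓ := w.length
  set r : ℝ := ((k + 1 - ℓ : ℕ) : ℝ)
  set q : ℝ := (Fintype.card A : ℝ)
  have hq : q ≠ 0 := by positivity
  have hqℓ : q ^ ℓ ≠ 0 := pow_ne_zero _ hq
  rw [pow_sub₀ q hq (by omega)] at hS1
  rw [pow_sub₀ q hq hk, pow_mul'] at hS2
  have hcard : ((Fintype.card (Fin k → A) : ℕ) : ℝ) = q ^ k := by simp [q]
  simp only [expectedOcc, sub_sq, sum_add_distrib, sum_sub_distrib, ← sum_mul, ← mul_sum, sum_const,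
    card_univ, nsmul_eq_mul, hcard, hS1]
  have key : 2 * (r / q ^ ℓ) * (r * (q ^ k * (q ^ ℓ)⁻¹)) - q ^ k * (r / q ^ ℓ) ^ 2 =
      r ^ 2 * (q ^ k * ((q ^ ℓ) ^ 2)⁻¹) := by
    field_simp
    ring
  linarith

theorem expectedOcc_nonneg (w : List A) (k : ℕ) : 0 ≤ expectedOcc w k := by
  unfold expectedOcc
  positivity

theorem expectedOcc_le [Nonempty A] {w : List A} {k : ℕ} (hℓ : 1 ≤ w.length) :
    expectedOcc w k ≤ k :=
  (div_le_self (Nat.cast_nonneg _) (one_le_pow₀ (by exact_mod_cast Fintype.card_pos))).trans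
    (by exact_mod_cast (by omega : k + 1 - w.length ≤ k))

noncomputable def atypicalBlocks (w : List A) (k : ℕ) (δ : ℝ) : Finset (List A) :=
  ({v : Fin k → A | δ * k ≤ |(occ (List.ofFn v) w : ℝ) - expectedOcc w k|} : Finset _).image
    List.ofFn

theorem ofFn_mem_atypicalBlocks {w : List A} {k : ℕ} {δ : ℝ} {v : Fin k → A} :
    List.ofFn v ∈ atypicalBlocks w k δ ↔
      δ * k ≤ |(occ (List.ofFn v) w : ℝ) - expectedOcc w k| := by
  rw [atypicalBlocks, List.ofFn_injective.mem_finset_image, mem_filter]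
  simp

theorem card_atypicalBlocks_le [Nonempty A] {w : List A} {k s : ℕ} {δ : ℝ} (hk : 2 * w.length ≤ k)
    (hk0 : 0 < k) (hs : s ≤ k) (hδ : 0 < δ)
    (hkδ : 2 * w.length * (Fintype.card A : ℝ) ^ s ≤ δ ^ 2 * k) :
    #(atypicalBlocks w k δ) ≤ Fintype.card A ^ (k - s) := by
  have hcheb := (card_filter_le_abs_mul_sq_le_sum_sq univ
    (fun v : Fin k → A => (occ (List.ofFn v) w : ℝ) - expectedOcc w k)
    (by positivity : 0 ≤ δ * k)).trans (sum_sq_occ_ofFn_sub_expectedOcc_le w hk)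
  have hℓr : (w.length : ℝ) * ((k + 1 - w.length : ℕ) : ℝ) ≤ w.length * k := by
    rcases Nat.eq_zero_or_pos w.length with h | h
    · simp [h]
    · gcongr
      exact_mod_cast (by omega : k + 1 - w.length ≤ k)
  have hbound : (#{v : Fin k → A | δ * k ≤ |(occ (List.ofFn v) w : ℝ) - expectedOcc w k|} : ℝ)
      ≤ ((Fintype.card A ^ (k - s) : ℕ) : ℝ) := by
    have hpos : 0 < (δ * k) ^ 2 := by positivity
    refine le_of_mul_le_mul_right ?_ hpos
    calc _ ≤ 2 * (w.length * ((k + 1 - w.length : ℕ) : ℝ)) * (Fintype.card A : ℝ) ^ k := by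
          linarith
      _ ≤ 2 * (w.length * k) * (Fintype.card A : ℝ) ^ k := by gcongr
      _ = (2 * w.length * (Fintype.card A : ℝ) ^ s) * k * (Fintype.card A : ℝ) ^ (k - s) := by
          rw [← pow_mul_pow_sub _ hs]
          ring
      _ ≤ (δ ^ 2 * k) * k * (Fintype.card A : ℝ) ^ (k - s) := by gcongr
      _ = _ := by push_cast; ring
  calc #(atypicalBlocks w k δ)
      ≤ #{v : Fin k → A | δ * k ≤ |(occ (List.ofFn v) w : ℝ) - expectedOcc w k|} :=
        card_image_le
    _ ≤ Fintype.card A ^ (k - s) := by exact_mod_cast hbound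

end Atypical


theorem exists_prefixCode [Fintype A] [Nontrivial A] (T : Finset (List A)) {n : ℕ}
    (hT : #T ≤ Fintype.card A ^ n) :
    ∃ c : List A → List A, Function.Injective c ∧
      (∀ u v, u.length = v.length → c u <+: c v → c u = c v) ∧
      ∀ u, (c u).length = if u ∈ T then n + 1 else u.length + 1 := by
  obtain ⟨e⟩ : Nonempty (T ↪ (Fin n → A)) :=
    Function.Embedding.nonempty_of_card_le (by simpa using hT)
  obtain ⟨a₀, a₁, ha⟩ := exists_pair_ne A
  let c (u : List A) : List A := if h : u ∈ T then a₁ :: List.ofFn (e ⟨u, h⟩) else a₀ :: u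
  -- The first letter tells the two kinds of codewords apart; within a kind, codewords of words of
  -- equal length have equal length.
  refine ⟨c, fun u v huv => ?_, fun u v hlen huv => ?_, fun u => ?_⟩
  · by_cases hu : u ∈ T <;> by_cases hv : v ∈ T <;> simp only [c, hu, hv, dite_true, dite_false,
      List.cons.injEq] at huv
    · exact congrArg Subtype.val (e.injective (List.ofFn_injective huv.2))
    · exact absurd huv.1.symm ha
    · exact absurd huv.1 ha
    · exact huv.2
  · refine huv.eq_of_length ?_
    by_cases hu : u ∈ T <;> by_cases hv : v ∈ T <;> simp only [c, hu, hv, dite_true, dite_false,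
      List.cons_prefix_cons] at huv ⊢
    · simp
    · exact absurd huv.1.symm ha
    · exact absurd huv.1 ha
    · simp [hlen]
  · by_cases hu : u ∈ T <;> simp [c, hu]


theorem abs_sum_sub_card_mul_le {ι : Type*} (s : Finset ι) (f : ι → ℝ) (c : ℝ) {B δ : ℝ}
    (hδ : 0 ≤ δ) (hB : ∀ i ∈ s, |f i - c| ≤ B) :
    |∑ i ∈ s, f i - #s * c| ≤ B * #{i ∈ s | δ ≤ |f i - c|} + δ * #s := by
  calc |∑ i ∈ s, f i - #s * c| = |∑ i ∈ s, (f i - c)| := by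
        rw [sum_sub_distrib, sum_const, nsmul_eq_mul]
    _ ≤ ∑ i ∈ s, |f i - c| := abs_sum_le_sum_abs _ _
    _ ≤ ∑ i ∈ s, if δ ≤ |f i - c| then B else δ := sum_le_sum fun i hi => by
        split_ifs with h
        · exact hB i hi
        · exact (not_le.1 h).le
    _ = B * #{i ∈ s | δ ≤ |f i - c|} + δ * #{i ∈ s | ¬δ ≤ |f i - c|} := by
        rw [sum_ite, sum_const, sum_const, nsmul_eq_mul, nsmul_eq_mul, mul_comm B, mul_comm δ]
    _ ≤ B * #{i ∈ s | δ ≤ |f i - c|} + δ * #s := by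
        gcongr
        exact filter_subset _ _

section Blocks

def block (x : ℕ → A) (k j : ℕ) : Fin k → A := fun i => x (j * k + i)

variable (x : ℕ → A) (w : List A) {k : ℕ}

theorem ofFn_block (j : ℕ) :
    List.ofFn (block x k j) = (List.range k).map fun i => x (j * k + i) :=
  ofFn_eq_pref fun _ => rfl

theorem occ_ofFn_block (j : ℕ) :
    occ (List.ofFn (block x k j)) w =
      Nat.count (fun i => OccursAt w x (j * k + i)) (k + 1 - w.length) := by
  rw [ofFn_block, ← pref, occ_pref_eq_count, occursAt_shift]

theorem abs_occ_pref_sub_sum_occ_block_le (hℓ : 1 ≤ w.length) (hℓk : w.length ≤ k) {m n : ℕ}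
    (hmn : m * k ≤ n) (hnm : n < m * k + k) :
    |(occ (pref x n) w : ℝ) - ∑ j ∈ range m, (occ (List.ofFn (block x k j)) w : ℝ)| ≤
      m * w.length + k := by
  -- The difference consists of occurrences straddling two blocks (fewer than `ℓ` per block) and
  -- occurrences in the incomplete last block.
  set Φ := ∑ j ∈ range m, occ (List.ofFn (block x k j)) w
  have hC := Nat.count_mul_eq_sum (OccursAt w x) m k
  have hΦC : Φ ≤ Nat.count (OccursAt w x) (m * k) := by
    rw [hC]
    refine sum_le_sum fun j _ => ?_
    rw [occ_ofFn_block]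
    exact Nat.count_monotone _ (by omega)
  have hCΦ : Nat.count (OccursAt w x) (m * k) ≤ Φ + m * w.length := by
    rw [hC]
    calc _ ≤ ∑ j ∈ range m, (occ (List.ofFn (block x k j)) w + w.length) := sum_le_sum fun j _ => by
          rw [occ_ofFn_block]
          exact (Nat.count_le_count_add_sub _ (k + 1 - w.length) k).trans (by omega)
      _ = Φ + m * w.length := by rw [sum_add_distrib, sum_const, card_range, smul_eq_mul]
  have h₁ := Nat.count_le_count_add_sub (OccursAt w x) (m * k) (n + 1 - w.length)
  have h₂ := Nat.count_le_count_add_sub (OccursAt w x) (n + 1 - w.length) (m * k)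
  have hCn : Nat.count (OccursAt w x) (n + 1 - w.length) ≤ Φ + m * w.length + k := by omega
  have hΦn : Φ ≤ Nat.count (OccursAt w x) (n + 1 - w.length) + k := by omega
  rw [occ_pref_eq_count, ← Nat.cast_sum, abs_sub_le_iff]
  constructor
  · have : (Nat.count (OccursAt w x) (n + 1 - w.length) : ℝ) ≤ Φ + m * w.length + k := by
      exact_mod_cast hCn
    linarith
  · have : (Φ : ℝ) ≤ Nat.count (OccursAt w x) (n + 1 - w.length) + k := by exact_mod_cast hΦn
    have : (0 : ℝ) ≤ m * w.length := by positivity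
    linarith

end Blocks

section Deviation

variable [Fintype A] [Nonempty A] (x : ℕ → A) (w : List A) {k : ℕ}

theorem abs_mul_expectedOcc_sub_le (hℓ : 1 ≤ w.length) (hℓk : w.length ≤ k) {m n : ℕ}
    (hmn : m * k ≤ n) (hnm : n < m * k + k) :
    |m * expectedOcc w k - n * ((Fintype.card A : ℝ) ^ w.length)⁻¹| ≤ m * w.length + k := by
  have hQ : 1 ≤ (Fintype.card A : ℝ) ^ w.length := one_le_pow₀ (by exact_mod_cast Fintype.card_pos)
  have hr : ((k + 1 - w.length : ℕ) : ℝ) = k + 1 - w.length := by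
    rw [Nat.cast_sub (by omega)]; push_cast; ring
  have hmn' : (m : ℝ) * k ≤ n := by exact_mod_cast hmn
  have hnm' : (n : ℝ) < m * k + k := by exact_mod_cast hnm
  have hℓ' : (1 : ℝ) ≤ w.length := by exact_mod_cast hℓ
  have hm : (0 : ℝ) ≤ m := Nat.cast_nonneg m
  have hdiff : |(m : ℝ) * ((k + 1 - w.length : ℕ) : ℝ) - n| ≤ m * w.length + k := by
    rw [hr, abs_sub_le_iff]
    constructor <;> nlinarith
  have hQ₀ : (0 : ℝ) < ((Fintype.card A : ℝ) ^ w.length)⁻¹ := by positivity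
  rw [expectedOcc, mul_div_assoc', div_eq_mul_inv, ← sub_mul, abs_mul, abs_of_pos hQ₀]
  calc _ ≤ ((m : ℝ) * w.length + k) * 1 :=
        mul_le_mul hdiff (inv_le_one_of_one_le₀ hQ) (by positivity) (by positivity)
    _ = _ := mul_one _

theorem abs_occ_ofFn_block_sub_expectedOcc_le {w : List A} (hℓ : 1 ≤ w.length) (j : ℕ) :
    |(occ (List.ofFn (block x k j)) w : ℝ) - expectedOcc w k| ≤ k := by
  have h : occ (List.ofFn (block x k j)) w ≤ k := by
    rw [occ_ofFn_block]
    exact (Nat.count_le _).trans (by omega)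
  have h' : (occ (List.ofFn (block x k j)) w : ℝ) ≤ k := by exact_mod_cast h
  have h₀ : (0 : ℝ) ≤ occ (List.ofFn (block x k j)) w := Nat.cast_nonneg _
  have hE₀ := expectedOcc_nonneg w k
  have hE₁ := expectedOcc_le (k := k) hℓ
  rw [abs_sub_le_iff]
  constructor <;> linarith

theorem le_card_atypical_blocks (hℓ : 1 ≤ w.length) (hℓk : w.length ≤ k) {ε : ℝ} (hε : 0 < ε)
    (hkε : 8 * w.length ≤ ε * k) {m n : ℕ} (hmn : m * k ≤ n) (hnm : n < m * k + k)
    (hm : 8 ≤ ε * m)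
    (hdev : ε ≤ |(occ (pref x n) w : ℝ) / n - ((Fintype.card A : ℝ) ^ w.length)⁻¹|) :
    ε * m / 4 ≤ #{j ∈ range m | List.ofFn (block x k j) ∈ atypicalBlocks w k (ε / 4)} := by
  set E := expectedOcc w k
  set p := ((Fintype.card A : ℝ) ^ w.length)⁻¹
  set a := #{j ∈ range m | List.ofFn (block x k j) ∈ atypicalBlocks w k (ε / 4)}
  have hk : (0 : ℝ) < k := by exact_mod_cast (by omega : 0 < k)
  have hmk : (m : ℝ) * k ≤ n := by exact_mod_cast hmn
  have hmpos : (0 : ℝ) < m := by nlinarith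
  have hn : (0 : ℝ) < n := by nlinarith
  have hsum := abs_sum_sub_card_mul_le (range m) _ E (by positivity : 0 ≤ ε / 4 * k)
    fun j _ => abs_occ_ofFn_block_sub_expectedOcc_le x hℓ j
  rw [filter_congr fun j _ => ofFn_mem_atypicalBlocks.symm, card_range] at hsum
  have hpref := abs_occ_pref_sub_sum_occ_block_le x w hℓ hℓk hmn hnm
  have hmean := abs_mul_expectedOcc_sub_le w hℓ hℓk hmn hnm
  have hdev' : ε * n ≤ |(occ (pref x n) w : ℝ) - n * p| := by
    rwa [show (occ (pref x n) w : ℝ) / n - p = ((occ (pref x n) w : ℝ) - n * p) / n by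
      field_simp, abs_div, abs_of_pos hn, le_div_iff₀ hn] at hdev
  -- Split the deviation into the block-boundary error, the deviations of the blocks from the mean
  -- (at most `k` for an atypical block, `ε k / 4` otherwise) and the difference of the means.
  have htri₁ := abs_sub_le (occ (pref x n) w : ℝ)
    (∑ j ∈ range m, (occ (List.ofFn (block x k j)) w : ℝ)) (n * p)
  have htri₂ := abs_sub_le (∑ j ∈ range m, (occ (List.ofFn (block x k j)) w : ℝ)) (m * E) (n * p)
  have h₁ : ε * (m * k) ≤ ε * n := mul_le_mul_of_nonneg_left hmk hε.le
  have h₂ : m * (8 * w.length) ≤ m * (ε * k) := mul_le_mul_of_nonneg_left hkε hmpos.le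
  have h₃ : k * (ε * m / 2) ≤ k * (2 + a) := by linarith
  linarith [le_of_mul_le_mul_left h₃ hk]

theorem frequently_le_card_atypical_blocks (hℓ : 1 ≤ w.length) (hℓk : w.length ≤ k) {ε : ℝ}
    (hε : 0 < ε) (hkε : 8 * w.length ≤ ε * k)
    (hdev : ∃ᶠ n in atTop,
      ε ≤ |(occ (pref x n) w : ℝ) / n - ((Fintype.card A : ℝ) ^ w.length)⁻¹|) :
    ∃ᶠ m in atTop,
      ε * m / 4 ≤ #{j ∈ range m | List.ofFn (block x k j) ∈ atypicalBlocks w k (ε / 4)} := by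
  have hk : 0 < k := by omega
  have hdiv := Nat.tendsto_div_const_atTop hk.ne'
  have hm : ∀ᶠ n in atTop, 8 ≤ ε * (n / k : ℕ) :=
    hdiv.eventually ((tendsto_natCast_atTop_atTop.const_mul_atTop hε).eventually_ge_atTop 8)
  refine hdiv.frequently_map _ (fun n ⟨hdev, hm⟩ => ?_) (hdev.and_eventually hm)
  exact le_card_atypical_blocks x w hℓ hℓk hε hkε (Nat.div_mul_le_self n k)
    (Nat.lt_div_mul_add hk) hm hdev

end Deviation

theorem sum_length_div_le_one_sub {c : List A → List A} {T : Finset (List A)} {b : ℕ → List A}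
    {k s m : ℕ} (hk : 0 < k) (hs : s ≤ k)
    (hc : ∀ j, (c (b j)).length = if b j ∈ T then k - s + 1 else k + 1) (hm : 0 < m)
    (hT : (2 * m : ℝ) ≤ s * #{j ∈ range m | b j ∈ T}) :
    (∑ j ∈ range m, ((c (b j)).length : ℝ)) / (m * k) ≤ 1 - 1 / k := by
  have hlen : ∀ j, (c (b j)).length + (if b j ∈ T then s else 0) = k + 1 := fun j => by
    rw [hc]; split_ifs <;> omega
  have htotal : ∑ j ∈ range m, (c (b j)).length + s * #{j ∈ range m | b j ∈ T} = m * (k + 1) := by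
    rw [mul_comm s, ← smul_eq_mul, ← sum_const, sum_filter, ← sum_add_distrib,
      sum_congr rfl fun j _ => hlen j, sum_const, card_range, smul_eq_mul]
  have htotal' : ∑ j ∈ range m, ((c (b j)).length : ℝ) + s * #{j ∈ range m | b j ∈ T} =
      m * (k + 1) := by exact_mod_cast htotal
  have hk' : (0 : ℝ) < k := by exact_mod_cast hk
  have hm' : (0 : ℝ) < m := by exact_mod_cast hm
  have hmk : 1 / (k : ℝ) * (m * k) = m := by field_simp
  rw [div_le_iff₀ (by positivity), sub_mul, hmk]
  linarith

def IsBlockCompressible [Fintype A] (x : ℕ → A) : Prop :=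
  ∃ k ≥ 1, ∃ c : List A → List A,
    (∀ u v : List A, u.length = k → v.length = k → c u = c v → u = v) ∧
    (∀ u v : List A, u.length = k → v.length = k → c u <+: c v → c u = c v) ∧
    Filter.liminf
      (fun n : ℕ =>
        ((∑ j ∈ Finset.range n,
            (c ((List.range k).map (fun i => x (j * k + i)))).length : ℝ)) / (n * k))
      atTop < 1

theorem isBlockCompressible_of_subsingleton [Fintype A] [Subsingleton A] (x : ℕ → A) :
    IsBlockCompressible x := by
  refine ⟨1, le_rfl, fun _ => [], fun u v hu hv _ => ?_, fun _ _ _ _ _ => rfl, ?_⟩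
  · exact List.ext_getElem (hu.trans hv.symm) fun _ _ _ => Subsingleton.elim _ _
  · simp

theorem isBlockCompressible_of_frequently_deviation [Fintype A] [Nontrivial A] (x : ℕ → A)
    {w : List A} (hℓ : 1 ≤ w.length) {ε : ℝ} (hε : 0 < ε)
    (hdev : ∃ᶠ n in atTop,
      ε ≤ |(occ (pref x n) w : ℝ) / n - ((Fintype.card A : ℝ) ^ w.length)⁻¹|) :
    IsBlockCompressible x := by
  -- Every block costs one flag letter and every atypical block saves `s`; infinitely often at least
  -- a fraction `ε / 4` of the blocks are atypical, so `s ≥ 8 / ε` saves a net letter per block.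
  obtain ⟨s, hs⟩ := exists_nat_ge (8 / ε)
  have hsε : 8 ≤ s * ε := by rwa [div_le_iff₀ hε] at hs
  have hkε : Tendsto (fun k : ℕ => ε * k) atTop atTop :=
    tendsto_natCast_atTop_atTop.const_mul_atTop hε
  have hkδ : Tendsto (fun k : ℕ => (ε / 4) ^ 2 * k) atTop atTop :=
    tendsto_natCast_atTop_atTop.const_mul_atTop (by positivity)
  obtain ⟨k, h2ℓ, hsk, h8ℓ, hq⟩ := ((eventually_ge_atTop (2 * w.length)).and
    ((eventually_ge_atTop s).and ((hkε.eventually_ge_atTop (8 * w.length)).and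
      (hkδ.eventually_ge_atTop (2 * w.length * (Fintype.card A : ℝ) ^ s))))).exists
  have hk : 0 < k := by omega
  obtain ⟨c, hinj, hpf, hlen⟩ := exists_prefixCode (atypicalBlocks w k (ε / 4))
    (card_atypicalBlocks_le h2ℓ hk hsk (by positivity) hq)
  refine ⟨k, hk, c, fun u v _ _ h => hinj h, fun u v hu hv => hpf u v (hu.trans hv.symm), ?_⟩
  have hratio : ∃ᶠ m in atTop, (∑ j ∈ range m,
      ((c ((List.range k).map fun i => x (j * k + i))).length : ℝ)) / (m * k) ≤ 1 - 1 / k := by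
    refine ((frequently_le_card_atypical_blocks x w hℓ (by omega) hε h8ℓ hdev).and_eventually
      (eventually_gt_atTop 0)).mono fun m ⟨hm, hm0⟩ => ?_
    simp only [← ofFn_block]
    refine sum_length_div_le_one_sub (T := atypicalBlocks w k (ε / 4)) hk hsk
      (fun j => by simp [hlen]) hm0 ?_
    nlinarith
  refine (liminf_le_of_frequently_le hratio
    (isBoundedUnder_of_eventually_ge (Eventually.of_forall fun n => by positivity))).trans_lt ?_
  have : (0 : ℝ) < 1 / k := by positivity
  linarith

theorem tendsto_occ_pref_nil (x : ℕ → A) :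
    Tendsto (fun n => (occ (pref x n) ([] : List A) : ℝ) / n) atTop (𝓝 1) := by
  have hocc (n : ℕ) : occ (pref x n) ([] : List A) = n + 1 := by
    rw [occ_pref_eq_count]
    exact Nat.count_of_forall fun _ _ t ht => absurd ht (Nat.not_lt_zero t)
  refine (by simpa using tendsto_const_nhds.add (tendsto_one_div_atTop_nhds_zero_nat (𝕜 := ℝ)) :
    Tendsto (fun n : ℕ => 1 + 1 / (n : ℝ)) atTop (𝓝 1)).congr' ?_
  filter_upwards [eventually_gt_atTop 0] with n hn
  rw [hocc]
  push_cast
  field_simp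

theorem exists_frequently_deviation_of_not_isNormal [Fintype A] {x : ℕ → A} (hx : ¬IsNormal x) :
    ∃ w : List A, 1 ≤ w.length ∧ ∃ ε > 0, ∃ᶠ n in atTop,
      ε ≤ |(occ (pref x n) w : ℝ) / n - ((Fintype.card A : ℝ) ^ w.length)⁻¹| := by
  obtain ⟨w, hw⟩ := not_forall.mp hx
  refine ⟨w, ?_, ?_⟩
  · rw [Nat.one_le_iff_ne_zero, Ne, List.length_eq_zero_iff]
    rintro rfl
    exact hw (by simpa using tendsto_occ_pref_nil x)
  · rw [Metric.tendsto_atTop] at hw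
    push Not at hw
    obtain ⟨ε, hε, h⟩ := hw
    exact ⟨ε, hε, frequently_atTop.mpr fun N => (h N).imp fun n ⟨hn, h⟩ => ⟨hn, h⟩⟩

end

/-- if `x` is not normal, then for some block length `k ≥ 1` there is an
injective coding `c` of the words of length `k` into a prefix-free set of words such
that block-coding by `c` compresses `x`:
`liminf |c(x[1..k]) ⋯ c(x[(n-1)k+1..nk])| / (nk) < 1`. -/
theorem not_normal_compressible {A : Type*} [Fintype A] (x : ℕ → A)
    (hx : ¬ IsNormal x) :
    ∃ k ≥ 1, ∃ c : List A → List A,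
      (∀ u v : List A, u.length = k → v.length = k → c u = c v → u = v) ∧
      (∀ u v : List A, u.length = k → v.length = k → c u <+: c v → c u = c v) ∧
      Filter.liminf
        (fun n : ℕ =>
          ((∑ j ∈ Finset.range n,
              (c ((List.range k).map (fun i => x (j * k + i)))).length : ℝ)) / (n * k))
        atTop < 1 := by
  rcases subsingleton_or_nontrivial A with _ | _
  · exact isBlockCompressible_of_subsingleton x
  · obtain ⟨w, hℓ, ε, hε, hdev⟩ := exists_frequently_deviation_of_not_isNormal hx
    exact isBlockCompressible_of_frequently_deviation x hℓ hε hdev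
end

section
/- Let x be normal and let 𝒜 be a trim group automaton accepting L whose run on x visits final states infinitely often. Then the non-oblivious selection x ⊓ L is an infinite sequence, and moreover the set of selected indices has positive lower density: liminf_{n→∞} #{i ≤ n : x_1⋯x_i ∈ L}/n > 0. -/
open Filter Topology

/-! Every state of the automaton can reach an accepting state within `D` letters, so among the
`|A|^ℓ` words of length `ℓ = k * D` at most `|Q| (|A|^D - 1)^k` are *bad*, i.e. avoid the
accepting states when read from some state. Cut `x` into aligned blocks of length `ℓ`: a block
either contains a selected index or carries a bad word. By normality the bad words occupy a
fraction `|Q| ρ^k` of the positions, `ρ = 1 - |A|^(-D)`, so since `k ρ^k → 0` a fraction at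
least `1/ℓ - |Q| ρ^k > 0` of the blocks contains a selected index. -/

open Finset

section

variable {A Q : Type*}

section Factors

variable (x : ℕ → A)

def factor (i m : ℕ) : List A := (List.range m).map fun t => x (i + t)

@[simp] lemma length_factor (i m : ℕ) : (factor x i m).length = m := by simp [factor]

@[simp] lemma length_pref (n : ℕ) : (pref x n).length = n := by simp [pref]

lemma pref_eq_factor (n : ℕ) : pref x n = factor x 0 n := by simp [pref, factor]

lemma factor_add (i a b : ℕ) : factor x i (a + b) = factor x i a ++ factor x (i + a) b := by
  simp [factor, List.range_add, Function.comp_def, add_assoc]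

lemma pref_add (i j : ℕ) : pref x (i + j) = pref x i ++ factor x i j := by
  rw [pref_eq_factor, pref_eq_factor, factor_add, zero_add]

lemma take_factor {m j : ℕ} (i : ℕ) (h : j ≤ m) : (factor x i m).take j = factor x i j := by
  simp [factor, ← List.map_take, List.take_range, Nat.min_eq_left h]

lemma take_drop_pref {i m n : ℕ} (h : i + m ≤ n) :
    ((pref x n).drop i).take m = factor x i m := by
  obtain ⟨k, rfl⟩ := Nat.exists_eq_add_of_le h
  rw [add_assoc, pref_add, List.drop_left' (length_pref x i), factor_add,
    List.take_left' (length_factor x i m)]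

end Factors

variable (A) in
def wordsOfLength [Fintype A] (m : ℕ) : Finset (List A) :=
  univ.map ⟨List.ofFn (n := m), List.ofFn_injective⟩

@[simp] lemma mem_wordsOfLength [Fintype A] {m : ℕ} {u : List A} :
    u ∈ wordsOfLength A m ↔ u.length = m := by
  refine ⟨?_, fun h => ?_⟩
  · simp only [wordsOfLength, Finset.mem_map, mem_univ, true_and, Function.Embedding.coeFn_mk]
    rintro ⟨f, rfl⟩
    exact List.length_ofFn
  · subst h
    exact Finset.mem_map.2 ⟨u.get, mem_univ _, List.ofFn_get u⟩

lemma card_wordsOfLength [Fintype A] (m : ℕ) : #(wordsOfLength A m) = Fintype.card A ^ m := by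
  simp [wordsOfLength]

section Occurrences

variable [DecidableEq A] (x : ℕ → A) {ℓ K n : ℕ}

lemma card_filter_factor_eq_le_occ (hℓ : 0 < ℓ) (hK : K * ℓ ≤ n) (u : List A) :
    #{t ∈ range K | factor x (t * ℓ) ℓ = u} ≤ occ (pref x n) u := by
  rw [occ, ← Set.ncard_coe_finset, ← Set.ncard_image_of_injective _ (mul_left_injective₀ hℓ.ne')]
  refine Set.ncard_le_ncard ?_ ((Set.finite_Iic n).subset fun i hi => ?_)
  · rintro _ ⟨t, ht, rfl⟩
    obtain ⟨htK, rfl⟩ := mem_filter.1 (mem_coe.1 ht)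
    have hle : t * ℓ + ℓ ≤ n := by nlinarith [mem_range.1 htK]
    exact ⟨by simpa using hle, by simpa using take_drop_pref x hle⟩
  · have := hi.1
    rw [length_pref] at this
    exact Set.mem_Iic.2 (by omega)

lemma card_filter_factor_mem_le_sum_occ (hℓ : 0 < ℓ) (hK : K * ℓ ≤ n) (B : Finset (List A)) :
    #{t ∈ range K | factor x (t * ℓ) ℓ ∈ B} ≤ ∑ u ∈ B, occ (pref x n) u := by
  have hmaps : Set.MapsTo (fun t => factor x (t * ℓ) ℓ)
      (({t ∈ range K | factor x (t * ℓ) ℓ ∈ B} : Finset ℕ) : Set ℕ) B :=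
    fun t ht => (mem_filter.1 (mem_coe.1 ht)).2
  rw [card_eq_sum_card_fiberwise hmaps]
  refine sum_le_sum fun u _ => (card_le_card fun t ht => ?_).trans
    (card_filter_factor_eq_le_occ x hℓ hK u)
  simp only [mem_filter] at ht ⊢
  exact ⟨ht.1.1, ht.2⟩

end Occurrences

lemma IsNormal.tendsto_sum_occ_div [Fintype A] {x : ℕ → A} (hx : IsNormal x)
    {B : Finset (List A)} {ℓ : ℕ} (hB : ∀ u ∈ B, u.length = ℓ) :
    Tendsto (fun n : ℕ => ((∑ u ∈ B, occ (pref x n) u : ℕ) : ℝ) / n) atTop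
      (𝓝 (#B / (Fintype.card A : ℝ) ^ ℓ)) := by
  have := tendsto_finsetSum B fun u hu => hB u hu ▸ hx u
  rw [sum_const, nsmul_eq_mul, ← div_eq_mul_inv] at this
  simpa only [Nat.cast_sum, sum_div] using this

lemma sub_le_liminf_div {f g : ℕ → ℝ} {c L : ℝ} (hg : Tendsto (fun n => g n / n) atTop (𝓝 L))
    (hlow : ∀ n, c * n ≤ f n + g n + 1) (hup : ∀ n, f n ≤ n) :
    c - L ≤ liminf (fun n => f n / n) atTop := by
  have h : Tendsto (fun n : ℕ => (c * n - g n - 1) / n) atTop (𝓝 (c - L)) := by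
    have := (tendsto_const_nhds (x := c)).sub hg |>.sub tendsto_one_div_atTop_nhds_zero_nat
    rw [sub_zero] at this
    refine this.congr' ((eventually_gt_atTop 0).mono fun n hn => ?_)
    field_simp
  rw [← h.liminf_eq]
  refine liminf_le_liminf ((eventually_gt_atTop 0).mono fun n hn => ?_) h.isBoundedUnder_ge
    (isCoboundedUnder_ge_of_le atTop fun n => div_le_one_of_le₀ (hup n) n.cast_nonneg)
  exact div_le_div_of_nonneg_right (by linarith [hlow n]) n.cast_nonneg

lemma infinite_setOf_of_liminf_density_pos {P : ℕ → Prop}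
    (h : 0 < liminf (fun n : ℕ => ({i | i ≤ n ∧ P i}.ncard : ℝ) / n) atTop) :
    {i | P i}.Infinite := by
  intro hfin
  have hlim : Tendsto (fun n : ℕ => ({i | i ≤ n ∧ P i}.ncard : ℝ) / n) atTop (𝓝 0) :=
    squeeze_zero (fun n => by positivity)
      (fun n => div_le_div_of_nonneg_right
        (Nat.cast_le.2 (Set.ncard_le_ncard (s := {i | i ≤ n ∧ P i}) (fun i hi => hi.2) hfin))
        n.cast_nonneg)
      (tendsto_const_div_atTop_nhds_zero_nat _)
  exact h.ne' hlim.liminf_eq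

namespace DFA

variable (M : DFA A Q)

/-- Only positive times count, so that a block of `x` whose word hits from the state reached
before it contains a selected index. -/
def HitsFrom (q : Q) (u : List A) : Prop :=
  ∃ j, 0 < j ∧ j ≤ u.length ∧ M.evalFrom q (u.take j) ∈ M.accept

variable {M}

lemma HitsFrom.append_right {q : Q} {u : List A} (h : M.HitsFrom q u) (v : List A) :
    M.HitsFrom q (u ++ v) := by
  obtain ⟨j, hj0, hju, hacc⟩ := h
  exact ⟨j, hj0, by simp; omega, by rwa [List.take_append_of_le_length hju]⟩

lemma HitsFrom.append_left {q : Q} {v : List A} (u : List A)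
    (h : M.HitsFrom (M.evalFrom q u) v) : M.HitsFrom q (u ++ v) := by
  obtain ⟨j, hj0, hjv, hacc⟩ := h
  refine ⟨u.length + j, by omega, by simp; omega, ?_⟩
  rwa [List.take_append, List.take_of_length_le (by omega), Nat.add_sub_cancel_left,
    evalFrom_of_append]

lemma hitsFrom_cons {q : Q} {a : A} {v : List A} (h : M.evalFrom (M.step q a) v ∈ M.accept) :
    M.HitsFrom q (a :: v) :=
  ⟨v.length + 1, by omega, le_rfl, by simpa using h⟩

lemma exists_uniform_length_hitsFrom [Fintype Q] [Nonempty A]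
    (hco : ∀ q, ∃ v, M.evalFrom q v ∈ M.accept) :
    ∃ D, 0 < D ∧ ∀ q, ∃ u : List A, u.length = D ∧ M.HitsFrom q u := by
  obtain ⟨a⟩ := ‹Nonempty A›
  choose v hv using fun q => hco (M.step q a)
  set m := univ.sup fun q => (v q).length
  refine ⟨m + 1, m.succ_pos, fun q => ⟨a :: v q ++ List.replicate (m - (v q).length) a, ?_,
    (hitsFrom_cons (hv q)).append_right _⟩⟩
  have : (v q).length ≤ m := le_sup (f := fun q => (v q).length) (mem_univ q)
  simp only [List.length_append, List.length_cons, List.length_replicate]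
  omega

variable [Fintype A]

variable (M) in
open Classical in
noncomputable def avoiding (q : Q) (m : ℕ) : Finset (List A) :=
  {u ∈ wordsOfLength A m | ¬ M.HitsFrom q u}

lemma mem_avoiding {q : Q} {m : ℕ} {u : List A} :
    u ∈ M.avoiding q m ↔ u.length = m ∧ ¬ M.HitsFrom q u := by
  simp [avoiding]

lemma avoiding_subset (q : Q) (m : ℕ) : M.avoiding q m ⊆ wordsOfLength A m :=
  fun _ hu => mem_wordsOfLength.2 (mem_avoiding.1 hu).1

lemma card_avoiding_lt {q : Q} {D : ℕ} (h : ∃ u, u.length = D ∧ M.HitsFrom q u) :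
    #(M.avoiding q D) < Fintype.card A ^ D := by
  rw [← card_wordsOfLength]
  obtain ⟨u, hu, hhit⟩ := h
  exact card_lt_card ((ssubset_iff_of_subset (avoiding_subset q D)).2
    ⟨u, mem_wordsOfLength.2 hu, fun h => (mem_avoiding.1 h).2 hhit⟩)

lemma card_avoiding_add_le {a b c d : ℕ} (ha : ∀ q, #(M.avoiding q a) ≤ c)
    (hb : ∀ q, #(M.avoiding q b) ≤ d) (q : Q) : #(M.avoiding q (a + b)) ≤ d * c := by
  classical
  refine (card_le_mul_card_image_of_maps_to (f := List.take a) (t := M.avoiding q a) ?_ d ?_).trans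
    (Nat.mul_le_mul_left d (ha q))
  · intro u hu
    obtain ⟨hlen, hnot⟩ := mem_avoiding.1 hu
    exact mem_avoiding.2 ⟨by simp [hlen], fun h => hnot (by
      simpa using h.append_right (u.drop a))⟩
  · intro u₁ _
    refine (card_le_card_of_injOn (List.drop a) (t := M.avoiding (M.evalFrom q u₁) b) ?_ ?_).trans
      (hb _)
    · intro u hu
      obtain ⟨hmem, rfl⟩ := mem_filter.1 (mem_coe.1 hu)
      obtain ⟨hlen, hnot⟩ := mem_avoiding.1 hmem
      exact mem_avoiding.2 ⟨by simp [hlen], fun h => hnot (by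
        simpa using h.append_left (u.take a))⟩
    · intro u hu v hv huv
      rw [← List.take_append_drop a u, ← List.take_append_drop a v,
        (mem_filter.1 (mem_coe.1 hu)).2, (mem_filter.1 (mem_coe.1 hv)).2]
      exact congrArg _ huv

lemma card_avoiding_mul_le {D c : ℕ} (h : ∀ q, #(M.avoiding q D) ≤ c) (k : ℕ) (q : Q) :
    #(M.avoiding q (k * D)) ≤ c ^ k := by
  induction k generalizing q with
  | zero =>
    calc #(M.avoiding q (0 * D)) ≤ #(wordsOfLength A (0 * D)) :=
          card_le_card (avoiding_subset q _)
      _ = c ^ 0 := by simp [card_wordsOfLength]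
  | succ k ih => rw [add_mul, one_mul, pow_succ']; exact card_avoiding_add_le ih h q

variable [Fintype Q]

variable (M) in
open Classical in
noncomputable def badWords (ℓ : ℕ) : Finset (List A) :=
  {u ∈ wordsOfLength A ℓ | ∃ q, ¬ M.HitsFrom q u}

lemma mem_badWords {ℓ : ℕ} {u : List A} :
    u ∈ M.badWords ℓ ↔ u.length = ℓ ∧ ∃ q, ¬ M.HitsFrom q u := by
  simp [badWords]

lemma card_badWords_le {ℓ c : ℕ} (h : ∀ q, #(M.avoiding q ℓ) ≤ c) :
    #(M.badWords ℓ) ≤ Fintype.card Q * c := by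
  classical
  calc #(M.badWords ℓ) ≤ #(univ.biUnion fun q => M.avoiding q ℓ) :=
        card_le_card fun u hu => by
          obtain ⟨hlen, q, hq⟩ := mem_badWords.1 hu
          exact mem_biUnion.2 ⟨q, mem_univ q, mem_avoiding.2 ⟨hlen, hq⟩⟩
    _ ≤ ∑ q, #(M.avoiding q ℓ) := card_biUnion_le
    _ ≤ Fintype.card Q * c := (sum_le_sum fun q _ => h q).trans_eq (by simp)

lemma exists_card_badWords_div_lt [Nonempty A] (hco : ∀ q, ∃ v, M.evalFrom q v ∈ M.accept) :
    ∃ ℓ, 0 < ℓ ∧ (#(M.badWords ℓ) : ℝ) / (Fintype.card A : ℝ) ^ ℓ < 1 / ℓ := by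
  obtain ⟨D, hD, hhit⟩ := exists_uniform_length_hitsFrom hco
  set N := Fintype.card A ^ D
  have hN : 0 < N := by positivity
  set ρ : ℝ := ((N - 1 : ℕ) : ℝ) / N
  have hρ0 : 0 ≤ ρ := by positivity
  have hρ1 : ρ < 1 := (div_lt_one (by positivity)).2 (by exact_mod_cast Nat.sub_lt hN one_pos)
  obtain ⟨k, hk, hkρ⟩ : ∃ k : ℕ, 0 < k ∧ k * ρ ^ k * (Fintype.card Q * D) < 1 := by
    have := (tendsto_self_mul_const_pow_of_lt_one hρ0 hρ1).mul_const ((Fintype.card Q : ℝ) * D)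
    rw [zero_mul] at this
    exact ((eventually_gt_atTop 0).and (this.eventually (gt_mem_nhds one_pos))).exists
  have hcard : #(M.badWords (k * D)) ≤ Fintype.card Q * (N - 1) ^ k :=
    card_badWords_le <| card_avoiding_mul_le
      (fun q => Nat.le_sub_one_of_lt (card_avoiding_lt (hhit q))) k
  have hkD : (0 : ℝ) < k * D := by positivity
  refine ⟨k * D, by positivity, ?_⟩
  calc (#(M.badWords (k * D)) : ℝ) / (Fintype.card A : ℝ) ^ (k * D)
      ≤ Fintype.card Q * ((N - 1 : ℕ) : ℝ) ^ k / (N : ℝ) ^ k := by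
        have hAN : (Fintype.card A : ℝ) ^ (k * D) = (N : ℝ) ^ k := by simp [N, pow_mul']
        rw [hAN]
        gcongr
        exact_mod_cast hcard
    _ = Fintype.card Q * ρ ^ k := by rw [div_pow, mul_div_assoc]
    _ < 1 / (k * D : ℕ) := by
        rw [Nat.cast_mul, lt_div_iff₀ hkD]
        linarith

variable (M) in
lemma div_le_ncard_accepting_add_sum_occ (x : ℕ → A) {ℓ : ℕ} (hℓ : 0 < ℓ) (n : ℕ) :
    n / ℓ ≤ {i : ℕ | i ≤ n ∧ 0 < i ∧ M.evalFrom M.start (pref x i) ∈ M.accept}.ncard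
      + ∑ u ∈ M.badWords ℓ, occ (pref x n) u := by
  classical
  set K := n / ℓ
  set S : Finset ℕ := {i ∈ Ioc 0 n | M.evalFrom M.start (pref x i) ∈ M.accept}
  have hS : {i : ℕ | i ≤ n ∧ 0 < i ∧ M.evalFrom M.start (pref x i) ∈ M.accept}.ncard = #S := by
    rw [← Set.ncard_coe_finset]
    congr 1
    ext i
    simp only [Set.mem_ofPred_eq, coe_filter, mem_Ioc, S]
    exact ⟨fun ⟨hn, hi, hacc⟩ => ⟨⟨hi, hn⟩, hacc⟩, fun ⟨⟨hi, hn⟩, hacc⟩ => ⟨hn, hi, hacc⟩⟩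
  have hKn : K * ℓ ≤ n := Nat.div_mul_le_self n ℓ
  have hcover : range K ⊆
      S.image (fun i => (i - 1) / ℓ) ∪ {t ∈ range K | factor x (t * ℓ) ℓ ∈ M.badWords ℓ} := by
    intro t ht
    have htK := mem_range.1 ht
    by_cases hhit : M.HitsFrom (M.evalFrom M.start (pref x (t * ℓ))) (factor x (t * ℓ) ℓ)
    · obtain ⟨j, hj0, hjℓ, hacc⟩ := hhit
      rw [length_factor] at hjℓ
      have hle : t * ℓ + j ≤ n := by nlinarith
      refine mem_union_left _ (mem_image.2 ⟨t * ℓ + j,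
        mem_filter.2 ⟨mem_Ioc.2 ⟨by omega, hle⟩, ?_⟩,
        Nat.div_eq_of_lt_le (by omega) (by rw [add_one_mul]; omega)⟩)
      rwa [pref_add, evalFrom_of_append, ← take_factor x _ hjℓ]
    · exact mem_union_right _ (mem_filter.2 ⟨ht, mem_badWords.2 ⟨length_factor .., _, hhit⟩⟩)
  calc n / ℓ = #(range K) := (card_range K).symm
    _ ≤ #(S.image fun i => (i - 1) / ℓ) + #{t ∈ range K | factor x (t * ℓ) ℓ ∈ M.badWords ℓ} :=
        (card_le_card hcover).trans (card_union_le _ _)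
    _ ≤ #S + ∑ u ∈ M.badWords ℓ, occ (pref x n) u :=
        add_le_add card_image_le (card_filter_factor_mem_le_sum_occ x hℓ hKn _)
    _ = _ := by rw [hS]

lemma sub_le_liminf_accepting_density {x : ℕ → A} (hx : IsNormal x) {ℓ : ℕ} (hℓ : 0 < ℓ) :
    1 / ℓ - #(M.badWords ℓ) / (Fintype.card A : ℝ) ^ ℓ ≤ liminf (fun n : ℕ =>
      ({i : ℕ | i ≤ n ∧ 0 < i ∧ M.evalFrom M.start (pref x i) ∈ M.accept}.ncard : ℝ) / n)
      atTop := by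
  refine sub_le_liminf_div (hx.tendsto_sum_occ_div fun u hu => (mem_badWords.1 hu).1)
    (fun n => ?_) (fun n => ?_)
  · have hfloor : (n : ℝ) / ℓ < (n / ℓ : ℕ) + 1 := by
      rw [← Nat.floor_div_eq_div (K := ℝ)]
      exact Nat.lt_floor_add_one _
    have hcount := (Nat.cast_le (α := ℝ)).2 (M.div_le_ncard_accepting_add_sum_occ x hℓ n)
    rw [one_div_mul_eq_div]
    push_cast at hcount ⊢
    linarith
  · have : {i : ℕ | i ≤ n ∧ 0 < i ∧ M.evalFrom M.start (pref x i) ∈ M.accept}.ncard ≤ n :=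
      (Set.ncard_le_ncard (t := ↑(Ioc 0 n)) fun i hi => mem_Ioc.2 ⟨hi.2.1, hi.1⟩).trans
        (by simp)
    exact_mod_cast this

end DFA

end

theorem selected_indices_positive_density_general {A Q : Type*} [Fintype A] [Fintype Q]
    (x : ℕ → A) (hx : IsNormal x) (M : DFA A Q)
    (htrim : ∀ q : Q, (∃ u : List A, M.evalFrom M.start u = q) ∧
      ∃ v : List A, M.evalFrom q v ∈ M.accept) :
    {i : ℕ | 0 < i ∧ M.evalFrom M.start (pref x i) ∈ M.accept}.Infinite ∧
    0 < Filter.liminf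
      (fun n : ℕ =>
        ({i : ℕ | i ≤ n ∧ 0 < i ∧ M.evalFrom M.start (pref x i) ∈ M.accept}.ncard : ℝ)
          / n)
      atTop := by
  have : Nonempty A := ⟨x 0⟩
  obtain ⟨ℓ, hℓ, hbad⟩ := M.exists_card_badWords_div_lt fun q => (htrim q).2
  have hdensity := (sub_pos.2 hbad).trans_le (M.sub_le_liminf_accepting_density hx hℓ)
  exact ⟨infinite_setOf_of_liminf_density_pos hdensity, hdensity⟩

/-- if `x` is normal, `𝒜` is a trim group automaton (with at least one
final state) accepting `L`, and the run of `x` visits final states infinitely often,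
then the set of selected indices `{i ≥ 1 : x_1⋯x_i ∈ L}` is infinite and has positive
lower density; in particular `x ⊓ L` is an infinite sequence. -/
theorem selected_indices_positive_density {A Q : Type*} [Fintype A] [Fintype Q]
    (x : ℕ → A) (hx : IsNormal x) (M : DFA A Q)
    (hG : ∀ a : A, Function.Bijective (fun q => M.step q a))
    (hF : M.accept.Nonempty)
    (htrim : ∀ q : Q, (∃ u : List A, M.evalFrom M.start u = q) ∧
      ∃ v : List A, M.evalFrom q v ∈ M.accept)
    (hinf : ∀ N : ℕ, ∃ n ≥ N, M.evalFrom M.start (pref x n) ∈ M.accept) :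
    {i : ℕ | 0 < i ∧ M.evalFrom M.start (pref x i) ∈ M.accept}.Infinite ∧
    0 < Filter.liminf
      (fun n : ℕ =>
        ({i : ℕ | i ≤ n ∧ 0 < i ∧ M.evalFrom M.start (pref x i) ∈ M.accept}.ncard : ℝ)
          / n)
      atTop :=
  selected_indices_positive_density_general x hx M htrim
end

section
/- In a transitive group automaton ⟨Q, A, δ, F⟩ with F ≠ ∅, form the k-digit buffered automaton on Q × A^k. For any infinite input sequence x whose buffered run eventually remains in a transition-closed strongly connected component Q' ⊆ Q × A^k, the projection of Q' to the first coordinate is all of Q; in particular Q' ∩ (F × A^k) is nonempty. -/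
lemma bstep_fst {A Q : Type*} (M : DFA A Q) [DecidablePred (· ∈ M.accept)] (k : ℕ)
    (s : Q × (Fin k → A)) (u : List A) :
    (List.foldl (bstep M k) s u).1 = M.evalFrom s.1 u := by
  induction u generalizing s with
  | nil => rfl
  | cons a u ih =>
    simp only [List.foldl_cons, ih]
    have : (bstep M k s a).1 = M.step s.1 a := by
      unfold bstep; split <;> rfl
    rw [this]; rfl

/-- in the `k`-digit buffered automaton over a transitive group automaton
with `F ≠ ∅`, if the buffered run of some infinite input eventually remains in a
transition-closed strongly connected component `Q'`, then the projection of `Q'` to the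
first coordinate is all of `Q`; in particular `Q'` contains a state with final first
coordinate. -/
theorem scc_projects_onto {A Q : Type*} [Fintype Q] (M : DFA A Q)
    [DecidablePred (· ∈ M.accept)]
    (hG : ∀ a : A, Function.Bijective (fun q => M.step q a))
    (htrans : ∀ p q : Q, ∃ u : List A, M.evalFrom p u = q)
    (hF : M.accept.Nonempty)
    (k : ℕ) (Q' : Set (Q × (Fin k → A)))
    (hclosed : ∀ s ∈ Q', ∀ a : A, bstep M k s a ∈ Q')
    (hSC : ∀ s ∈ Q', ∀ t ∈ Q', ∃ u : List A, List.foldl (bstep M k) s u = t)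
    (hrun : ∃ (x : ℕ → A) (s₀ : Q × (Fin k → A)) (N : ℕ),
      ∀ n ≥ N, List.foldl (bstep M k) s₀ (pref x n) ∈ Q') :
    (Prod.fst '' Q' = Set.univ) ∧ ∃ s ∈ Q', s.1 ∈ M.accept := by
  obtain ⟨x, s₀, N, hN⟩ := hrun
  have hs : List.foldl (bstep M k) s₀ (pref x N) ∈ Q' := hN N le_rfl
  set s := List.foldl (bstep M k) s₀ (pref x N) with hsdef
  have hclosed' : ∀ t ∈ Q', ∀ u : List A, List.foldl (bstep M k) t u ∈ Q' := by
    intro t ht u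
    induction u generalizing t with
    | nil => exact ht
    | cons a u ih => exact ih _ (hclosed t ht a)
  have hproj : Prod.fst '' Q' = Set.univ := by
    ext q
    simp only [Set.mem_univ, iff_true, Set.mem_image]
    obtain ⟨u, hu⟩ := htrans s.1 q
    exact ⟨List.foldl (bstep M k) s u, hclosed' s hs u, (bstep_fst M k s u).trans hu⟩
  refine ⟨hproj, ?_⟩
  obtain ⟨f, hf⟩ := hF
  have : f ∈ Prod.fst '' Q' := hproj ▸ Set.mem_univ f
  obtain ⟨t, ht, hteq⟩ := this
  exact ⟨t, ht, hteq ▸ hf⟩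
end

section
/- Let y = x ⊓ L be the non-oblivious selection of x by L, where L is accepted by the DFA ⟨Q, A, δ, q_0, F⟩, and let i_1 < i_2 < ⋯ enumerate the indices i with x_1⋯x_i ∈ L. Consider the k-digit buffered automaton run of x starting from (q_0, w_0). Then for all j ≥ 1, the buffer content of the buffered state reached after i_{j+k-1} input symbols equals y[j..j+k-1]; i.e., the block y[j..j+k-1] is the buffer content at the (j+k-1)-th visit to a final buffered state. -/
/-- let `y = x ⊓ L` with `L` accepted by the DFA `M`, let
`i_1 < i_2 < ⋯` enumerate the selected indices, and run the `k`-digit buffered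
automaton on `x` from `(q_0, w_0)`.  Then (with 0-indexed `j`) after consuming the
input up to and including the `(j + k)`-th selected symbol, the buffer content is
exactly the block `y[j..j+k-1]`. -/
theorem buffer_contains_block {A Q : Type*} [Fintype A] (M : DFA A Q)
    [DecidablePred (· ∈ M.accept)] (x : ℕ → A) (k : ℕ) (hk : 0 < k)
    (w₀ : Fin k → A)
    (hinf : {n : ℕ | pref x (n + 1) ∈ M.accepts}.Infinite) :
    ∀ j : ℕ,
      (List.foldl (bstep M k) (M.start, w₀)
          (pref x (Nat.nth (fun n => pref x (n + 1) ∈ M.accepts) (j + k - 1) + 1))).2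
        = fun m : Fin k =>
            nonObliviousSel x {w : List A | w ∈ M.accepts} (j + (m : ℕ)) := by
  classical
  set p : ℕ → Prop := fun n => pref x (n + 1) ∈ M.accepts with hp
  have hstate : ∀ (l : List A) (s : Q × (Fin k → A)),
      (List.foldl (bstep M k) s l).1 = M.evalFrom s.1 l := by
    intro l
    induction l with
    | nil => intro s; rfl
    | cons a l ih =>
      intro s
      rw [List.foldl_cons]
      rw [ih]
      show M.evalFrom (bstep M k s a).1 l = M.evalFrom (M.step s.1 a) l
      unfold bstep
      split <;> rfl
  have hpref : ∀ n, pref x (n + 1) = pref x n ++ [x n] := by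
    intro n; simp [pref, List.range_succ]
  have hbuf : ∀ n, (List.foldl (bstep M k) (M.start, w₀) (pref x n)).2
      = fun m : Fin k => if h : (m : ℕ) + Nat.count p n < k
          then w₀ ⟨(m : ℕ) + Nat.count p n, h⟩
          else x (Nat.nth p ((m : ℕ) + Nat.count p n - k)) := by
    intro n
    induction n with
    | zero =>
      funext m
      simp [pref, m.isLt]
    | succ n ih =>
      rw [hpref, List.foldl_append, List.foldl_cons, List.foldl_nil]
      have hev : M.step (List.foldl (bstep M k) (M.start, w₀) (pref x n)).1 (x n)
          ∈ M.accept ↔ p n := by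
        rw [hstate]
        have : M.step (M.evalFrom M.start (pref x n)) (x n)
            = M.eval (pref x (n + 1)) := by
          rw [hpref]
          simp [DFA.eval, DFA.evalFrom_append_singleton]
        rw [this]
        rfl
      by_cases hpn : p n
      · rw [bstep, if_pos (hev.mpr hpn)]
        simp only
        rw [ih]
        funext m
        have hc : Nat.count p (n + 1) = Nat.count p n + 1 :=
          Nat.count_succ_eq_succ_count hpn
        rw [hc]
        unfold shiftPush
        by_cases hm : (m : ℕ) + 1 < k
        · rw [dif_pos hm]
          simp only
          have : (m : ℕ) + 1 + Nat.count p n = (m : ℕ) + (Nat.count p n + 1) := by omega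
          rw [this]
        · rw [dif_neg hm]
          have hmk : (m : ℕ) + 1 = k := by have := m.isLt; omega
          have hge : ¬ ((m : ℕ) + (Nat.count p n + 1) < k) := by omega
          rw [dif_neg hge]
          have : (m : ℕ) + (Nat.count p n + 1) - k = Nat.count p n := by omega
          rw [this, Nat.nth_count hpn]
      · rw [bstep, if_neg (fun h => hpn (hev.mp h))]
        simp only
        rw [ih]
        have hc : Nat.count p (n + 1) = Nat.count p n :=
          Nat.count_succ_eq_count hpn
        rw [hc]
  intro j
  rw [hbuf]
  funext m
  have hcnt : Nat.count p (Nat.nth p (j + k - 1) + 1) = j + k := by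
    rw [Nat.count_nth_succ_of_infinite hinf]
    omega
  rw [hcnt]
  have hge : ¬ ((m : ℕ) + (j + k) < k) := by omega
  rw [dif_neg hge]
  show x (Nat.nth p ((m : ℕ) + (j + k) - k)) = x (Nat.nth p (j + (m : ℕ)))
  congr 2
  omega
end
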